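/- arXiv:1403.2234 — 6 statements merged into one kernel-verified Lean document; each statement's English description precedes it below -/
import Mathlib

section
/- Let $f:[0,\infty)\to[0,\infty)$ be monotone decreasing with $f(0)=1$, and let $X=\{x_k\}_{k\in\mathbb{N}}\subset\mathbb{R}^n$ be a separated set with $d_*(X)=\inf_{i\ne j}|x_i-x_j|>0$, whose linear span has dimension $d$. If $\int_0^\infty t^{d-1}f(t)\,dt<\infty$, then the Schoenberg matrix $\mathcal{S}_X(f)=\|f(|x_i-x_j|)\|_{i,j}$ defines a bounded self-adjoint operator $S_X(f)$ on $\ell^2(\mathbb{N})$ with $\|S_X(f)\| \le 1 + d^2 (5/d_*(X))^d \int_0^\infty t^{d-1} f(t)\,dt$. -/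
/-!
By the Schur test, a symmetric matrix with nonnegative entries and row sums at most `M` acts on
`ℓ²` with norm at most `M`: summing the weighted Cauchy–Schwarz inequality
`(∑ⱼ aᵢⱼ uⱼ)² ≤ (∑ⱼ aᵢⱼ) ∑ⱼ aᵢⱼ uⱼ²` over `i` and using the column sums gives `‖a u‖² ≤ M² ‖u‖²`.
So it suffices to bound the row sums of `f |xᵢ - xⱼ|`. The diagonal term is `f 0 = 1`. For the
others, work in the `d`-dimensional span of `X` and sort the points into shells
`(k + 1) δ ≤ |xᵢ - xⱼ| < (k + 2) δ`. The disjoint balls of radius `δ / 2` around the points of a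
shell lie in an annulus, so comparing volumes bounds the shell by `5ᵈ ((k + 1)ᵈ - kᵈ)` points;
as `f` decreases, `((k + 1)ᵈ - kᵈ) δᵈ f ((k + 1) δ) ≤ d ∫_{kδ}^{(k+1)δ} tᵈ⁻¹ f t`, and summing over
the shells bounds the row sum by `1 + d (5 / δ)ᵈ ∫₀^∞ tᵈ⁻¹ f t`.
-/

open Set MeasureTheory Metric Module
open scoped ENNReal lp

theorem ENNReal.tsum_mul_sq_le {ι : Type*} (w u : ι → ℝ≥0∞) :
    (∑' i, w i * u i) ^ 2 ≤ (∑' i, w i) * ∑' i, w i * u i ^ 2 := by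
  let : MeasurableSpace ι := ⊤
  have hsqrt : ∀ x : ℝ≥0∞, (x ^ (1 / 2 : ℝ)) ^ 2 = x := fun x => by
    rw [← ENNReal.rpow_natCast, ← ENNReal.rpow_mul]; norm_num
  -- Hölder's inequality for the counting measure, applied to `√w` and `√w * u`.
  have hCS := ENNReal.lintegral_mul_le_Lp_mul_Lq Measure.count Real.HolderConjugate.two_two
    (f := fun i => w i ^ (1 / 2 : ℝ)) (g := fun i => w i ^ (1 / 2 : ℝ) * u i)
    measurable_from_top.aemeasurable measurable_from_top.aemeasurable
  simp only [lintegral_count, Pi.mul_apply, ENNReal.rpow_two, mul_pow, hsqrt, ← mul_assoc,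
    ← sq] at hCS
  calc (∑' i, w i * u i) ^ 2
      ≤ ((∑' i, w i) ^ (1 / 2 : ℝ) * (∑' i, w i * u i ^ 2) ^ (1 / 2 : ℝ)) ^ 2 := by gcongr
    _ = (∑' i, w i) * ∑' i, w i * u i ^ 2 := by rw [mul_pow, hsqrt, hsqrt]

theorem ENNReal.tsum_sq_tsum_mul_le {ι κ : Type*} (a : ι → κ → ℝ≥0∞) {M : ℝ≥0∞}
    (hrow : ∀ i, ∑' j, a i j ≤ M) (hcol : ∀ j, ∑' i, a i j ≤ M) (u : κ → ℝ≥0∞) :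
    ∑' i, (∑' j, a i j * u j) ^ 2 ≤ M ^ 2 * ∑' j, u j ^ 2 :=
  calc ∑' i, (∑' j, a i j * u j) ^ 2
      ≤ ∑' i, M * ∑' j, a i j * u j ^ 2 := ENNReal.tsum_le_tsum fun i =>
        (ENNReal.tsum_mul_sq_le _ _).trans (by gcongr; exact hrow i)
    _ = M * ∑' j, (∑' i, a i j) * u j ^ 2 := by
        rw [ENNReal.tsum_mul_left, ENNReal.tsum_comm]
        simp only [ENNReal.tsum_mul_right]
    _ ≤ M * ∑' j, M * u j ^ 2 := by gcongr with j; exact hcol j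
    _ = M ^ 2 * ∑' j, u j ^ 2 := by rw [ENNReal.tsum_mul_left, ← mul_assoc, sq]

theorem ENNReal.tsum_enorm_le_ofReal_of_sum_le {κ : Type*} {g : κ → ℝ} {M : ℝ}
    (hg : ∀ j, 0 ≤ g j) (h : ∀ s : Finset κ, ∑ j ∈ s, g j ≤ M) : ∑' j, ‖g j‖ₑ ≤ ENNReal.ofReal M :=
  ENNReal.summable.tsum_le_of_sum_le fun s => by
    rw [Finset.sum_congr rfl fun j _ => Real.enorm_of_nonneg (hg j),
      ← ENNReal.ofReal_sum_of_nonneg fun j _ => hg j]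
    exact ENNReal.ofReal_le_ofReal (h s)

theorem lp.tsum_enorm_sq_le {ι : Type*} (x : ℓ²(ι, ℝ)) :
    ∑' j, ‖x j‖ₑ ^ 2 ≤ ENNReal.ofReal (‖x‖ ^ 2) := by
  have h := ENNReal.tsum_enorm_le_ofReal_of_sum_le (g := fun j => ‖x j‖ ^ 2)
    (fun j => by positivity) fun s => by
      simpa using lp.sum_rpow_le_norm_rpow (p := 2) (by norm_num) x s
  simpa [enorm_pow] using h

section SchurOperator

variable {ι : Type*} {A : ι → ι → ℝ} {M : ℝ}

theorem summable_mul_of_sum_le (hA : ∀ i j, 0 ≤ A i j)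
    (hrow : ∀ i (s : Finset ι), ∑ j ∈ s, A i j ≤ M) (x : ℓ²(ι, ℝ)) (i : ι) :
    Summable fun j => A i j * x j :=
  Summable.of_norm_bounded ((summable_of_sum_le (hA i) (hrow i)).mul_right ‖x‖) fun j => by
    rw [norm_mul, Real.norm_of_nonneg (hA i j)]
    exact mul_le_mul_of_nonneg_left (lp.norm_apply_le_norm two_ne_zero x j) (hA i j)

theorem sum_sq_norm_tsum_mul_le (hA : ∀ i j, 0 ≤ A i j) (hsymm : ∀ i j, A i j = A j i)
    (hrow : ∀ i (s : Finset ι), ∑ j ∈ s, A i j ≤ M) (hM : 0 ≤ M) (x : ℓ²(ι, ℝ))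
    (s : Finset ι) : ∑ i ∈ s, ‖∑' j, A i j * x j‖ ^ 2 ≤ (M * ‖x‖) ^ 2 := by
  have hrowE : ∀ i, ∑' j, ‖A i j‖ₑ ≤ ENNReal.ofReal M :=
    fun i => ENNReal.tsum_enorm_le_ofReal_of_sum_le (hA i) (hrow i)
  have hcolE : ∀ j, ∑' i, ‖A i j‖ₑ ≤ ENNReal.ofReal M :=
    fun j => by simpa only [hsymm _ j] using hrowE j
  -- In `ℝ≥0∞` the estimate needs no summability side conditions.
  rw [← ENNReal.ofReal_le_ofReal_iff (by positivity)]
  calc ENNReal.ofReal (∑ i ∈ s, ‖∑' j, A i j * x j‖ ^ 2)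
      = ∑ i ∈ s, ‖∑' j, A i j * x j‖ₑ ^ 2 := by
        rw [ENNReal.ofReal_sum_of_nonneg fun _ _ => by positivity]
        exact Finset.sum_congr rfl fun i _ => by
          rw [ENNReal.ofReal_pow (norm_nonneg _), ofReal_norm]
    _ ≤ ∑' i, ‖∑' j, A i j * x j‖ₑ ^ 2 := ENNReal.sum_le_tsum s
    _ ≤ ∑' i, (∑' j, ‖A i j‖ₑ * ‖x j‖ₑ) ^ 2 := by
        gcongr with i
        exact enorm_tsum_le_tsum_enorm.trans_eq (tsum_congr fun j => enorm_mul _ _)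
    _ ≤ ENNReal.ofReal M ^ 2 * ∑' j, ‖x j‖ₑ ^ 2 :=
        ENNReal.tsum_sq_tsum_mul_le _ hrowE hcolE _
    _ ≤ ENNReal.ofReal M ^ 2 * ENNReal.ofReal (‖x‖ ^ 2) := by
        gcongr
        exact lp.tsum_enorm_sq_le x
    _ = ENNReal.ofReal ((M * ‖x‖) ^ 2) := by
        rw [← ENNReal.ofReal_pow hM, ← ENNReal.ofReal_mul (by positivity), mul_pow]

theorem memℓp_tsum_mul (hA : ∀ i j, 0 ≤ A i j) (hsymm : ∀ i j, A i j = A j i)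
    (hrow : ∀ i (s : Finset ι), ∑ j ∈ s, A i j ≤ M) (hM : 0 ≤ M) (x : ℓ²(ι, ℝ)) :
    Memℓp (fun i => ∑' j, A i j * x j) 2 :=
  memℓp_gen' fun s => by simpa using sum_sq_norm_tsum_mul_le hA hsymm hrow hM x s

variable (A) in
noncomputable def schurOperator (hA : ∀ i j, 0 ≤ A i j)
    (hsymm : ∀ i j, A i j = A j i) (hrow : ∀ i (s : Finset ι), ∑ j ∈ s, A i j ≤ M)
    (hM : 0 ≤ M) : ℓ²(ι, ℝ) →L[ℝ] ℓ²(ι, ℝ) :=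
  LinearMap.mkContinuous
    { toFun x := ⟨fun i => ∑' j, A i j * x j, memℓp_tsum_mul hA hsymm hrow hM x⟩
      map_add' x y := by
        ext i
        change ∑' j, A i j * (x j + y j) = ∑' j, A i j * x j + ∑' j, A i j * y j
        simp only [mul_add]
        exact (summable_mul_of_sum_le hA hrow x i).tsum_add (summable_mul_of_sum_le hA hrow y i)
      map_smul' c x := by
        ext i
        simp [mul_left_comm _ c, tsum_mul_left] }
    M fun x => lp.norm_le_of_forall_sum_le (p := 2) (by norm_num) (by positivity) fun s => by
      simpa using sum_sq_norm_tsum_mul_le hA hsymm hrow hM x s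

variable (hA : ∀ i j, 0 ≤ A i j) (hsymm : ∀ i j, A i j = A j i)
  (hrow : ∀ i (s : Finset ι), ∑ j ∈ s, A i j ≤ M) (hM : 0 ≤ M)

theorem norm_schurOperator_le : ‖schurOperator A hA hsymm hrow hM‖ ≤ M :=
  LinearMap.mkContinuous_norm_le _ hM _

theorem schurOperator_apply (x : ℓ²(ι, ℝ)) (i : ι) :
    schurOperator A hA hsymm hrow hM x i = ∑' j, A i j * x j :=
  rfl

theorem schurOperator_single_apply [DecidableEq ι] (i j : ι) :
    schurOperator A hA hsymm hrow hM (lp.single 2 j 1) i = A i j := by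
  rw [schurOperator_apply, tsum_eq_single j fun k hk => by simp [hk]]
  simp

theorem inner_schurOperator_single [DecidableEq ι] (i j : ι) :
    inner ℝ (schurOperator A hA hsymm hrow hM (lp.single 2 j 1)) (lp.single 2 i 1) = A i j := by
  simp [lp.inner_single_right, schurOperator_single_apply]

theorem isSelfAdjoint_schurOperator : IsSelfAdjoint (schurOperator A hA hsymm hrow hM) := by
  classical
  rw [ContinuousLinearMap.isSelfAdjoint_iff']
  refine lp.ext_continuousLinearMap (by norm_num) fun i => ContinuousLinearMap.ext_ring ?_
  ext j
  have hcoord : ∀ v : ℓ²(ι, ℝ), v j = inner ℝ (lp.single 2 j 1) v := fun v => by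
    simp [lp.inner_single_left]
  simp only [ContinuousLinearMap.comp_apply, lp.singleContinuousLinearMap_apply]
  rw [hcoord, ContinuousLinearMap.adjoint_inner_right, inner_schurOperator_single,
    schurOperator_single_apply, hsymm]

end SchurOperator

theorem add_pow_sub_pow_le_add_pow_sub_pow (d : ℕ) {b c s : ℝ} (hb : 0 ≤ b) (hbc : b ≤ c)
    (hs : 0 ≤ s) : (b + s) ^ d - b ^ d ≤ (c + s) ^ d - c ^ d := by
  have hexpand (x : ℝ) :
      (x + s) ^ d - x ^ d = ∑ k ∈ Finset.range d, x ^ k * s ^ (d - k) * d.choose k := by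
    simp [add_pow, Finset.sum_range_succ]
  rw [hexpand, hexpand]
  gcongr

theorem two_mul_add_five_pow_sub_le (d : ℕ) {x : ℝ} (hx : 0 ≤ x) :
    (2 * x + 5) ^ d - (2 * x + 1) ^ d ≤ 5 ^ d * ((x + 1) ^ d - x ^ d) :=
  calc (2 * x + 5) ^ d - (2 * x + 1) ^ d ≤ (5 * x + 5) ^ d - (5 * x + 1) ^ d := by
        have := add_pow_sub_pow_le_add_pow_sub_pow d (b := 2 * x + 1) (c := 5 * x + 1) (s := 4)
          (by positivity) (by linarith) (by norm_num)
        ring_nf at this ⊢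
        linarith
    _ ≤ (5 * x + 5) ^ d - (5 * x) ^ d := by
        gcongr; linarith
    _ = 5 ^ d * ((x + 1) ^ d - x ^ d) := by rw [mul_sub, ← mul_pow, ← mul_pow]; ring_nf

theorem pow_sub_pow_mul_le_integral {f : ℝ → ℝ} {a b : ℝ} (d : ℕ) (ha : 0 ≤ a)
    (hab : a ≤ b) (hf : AntitoneOn f (Icc a b)) :
    (b ^ d - a ^ d) * f b ≤ d * ∫ t in a..b, t ^ (d - 1) * f t := by
  rcases d with _ | d
  · simp
  have hfint : IntervalIntegrable f volume a b := (uIcc_of_le hab ▸ hf).intervalIntegrable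
  have hmono : ∫ t in a..b, t ^ d * f b ≤ ∫ t in a..b, t ^ d * f t := by
    refine intervalIntegral.integral_mono_on hab ?_ (hfint.continuousOn_mul (by fun_prop))
      fun t ht => ?_
    · exact (continuous_pow d).intervalIntegrable a b |>.mul_const _
    · exact mul_le_mul_of_nonneg_left (hf ht ⟨hab, le_rfl⟩ ht.2) (pow_nonneg (ha.trans ht.1) d)
  rw [intervalIntegral.integral_mul_const, integral_pow] at hmono
  push_cast at hmono ⊢
  have hfactor : (b ^ (d + 1) - a ^ (d + 1)) * f b =
      (d + 1) * ((b ^ (d + 1) - a ^ (d + 1)) / (d + 1) * f b) := by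
    field_simp
  rw [hfactor]
  gcongr

theorem mem_Ico_floor_div_sub_one_mul {δ t : ℝ} (hδ : 0 < δ) (ht : δ ≤ t) :
    t ∈ Ico ((⌊t / δ - 1⌋₊ + 1) * δ) ((⌊t / δ - 1⌋₊ + 2) * δ) := by
  have h0 : 0 ≤ t / δ - 1 := by rwa [sub_nonneg, one_le_div hδ]
  have h1 := Nat.floor_le h0
  have h2 := Nat.lt_floor_add_one (t / δ - 1)
  exact ⟨(le_div_iff₀ hδ).1 (by linarith), (div_lt_iff₀ hδ).1 (by linarith)⟩

theorem sum_intervalIntegral_le_integral_Ioi {g : ℝ → ℝ} (hg : ∀ t, 0 < t → 0 ≤ g t)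
    (hint : IntegrableOn g (Ioi 0)) {δ : ℝ} (hδ : 0 ≤ δ) (K : ℕ) :
    ∑ k ∈ Finset.range K, ∫ t in k * δ..(k + 1) * δ, g t ≤ ∫ t in Ioi 0, g t := by
  have hpieces (k : ℕ) : IntervalIntegrable g volume (k * δ) ((k + 1 : ℕ) * δ) := by
    rw [intervalIntegrable_iff_integrableOn_Ioc_of_le (by gcongr; simp)]
    exact hint.mono_set fun t ht => lt_of_le_of_lt (by positivity) ht.1
  have hsum := intervalIntegral.sum_integral_adjacent_intervals (a := fun k : ℕ => k * δ)
    (n := K) fun k _ => hpieces k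
  push_cast at hsum
  rw [hsum, zero_mul, intervalIntegral.integral_of_le (by positivity)]
  exact setIntegral_mono_set hint ((ae_restrict_iff' measurableSet_Ioi).2 (ae_of_all _ hg))
    Ioc_subset_Ioi_self.eventuallyLE

section Packing

variable {E : Type*} [NormedAddCommGroup E] [NormedSpace ℝ E] [FiniteDimensional ℝ E]
  {ι : Type*}

theorem card_mul_pow_le_of_pairwise_dist_le {s : Finset ι} {y : ι → E} {c : E} {δ r : ℝ}
    (hδ : 0 < δ) (hr : δ / 2 < r)
    (hsep : (s : Set ι).Pairwise fun i j => δ ≤ dist (y i) (y j))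
    (hy : ∀ i ∈ s, dist c (y i) ∈ Ico r (r + δ)) :
    s.card * (δ / 2) ^ finrank ℝ E ≤
      (r + 3 * δ / 2) ^ finrank ℝ E - (r - δ / 2) ^ finrank ℝ E := by
  borelize E
  set μ : Measure E := Measure.addHaar
  set d := finrank ℝ E
  have hvol (x : E) {ρ : ℝ} (hρ : 0 < ρ) :
      μ (ball x ρ) = ENNReal.ofReal (ρ ^ d) * μ (ball 0 1) :=
    Measure.addHaar_ball_of_pos μ x hρ
  have hunit : μ (ball 0 1) ≠ 0 := (measure_ball_pos μ _ one_pos).ne'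
  have hsub : ∀ i ∈ s, ball (y i) (δ / 2) ⊆ ball c (r + 3 * δ / 2) \ ball c (r - δ / 2) := by
    intro i hi z hz
    rw [mem_ball] at hz
    obtain ⟨hlo, hhi⟩ := hy i hi
    constructor
    · rw [mem_ball]; linarith [dist_triangle z (y i) c, dist_comm c (y i)]
    · rw [mem_ball, not_lt]; linarith [dist_triangle c z (y i), dist_comm z c]
  have hdisj : (s : Set ι).PairwiseDisjoint fun i => ball (y i) (δ / 2) :=
    hsep.mono' fun i j h => ball_disjoint_ball (by linarith)
  have hmeasure : (s.card : ℝ≥0∞) * (ENNReal.ofReal ((δ / 2) ^ d) * μ (ball 0 1)) ≤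
      ENNReal.ofReal ((r + 3 * δ / 2) ^ d - (r - δ / 2) ^ d) * μ (ball 0 1) := by
    calc (s.card : ℝ≥0∞) * (ENNReal.ofReal ((δ / 2) ^ d) * μ (ball 0 1))
        = μ (⋃ i ∈ s, ball (y i) (δ / 2)) := by
          rw [measure_biUnion_finset hdisj fun i _ => measurableSet_ball,
            Finset.sum_congr rfl fun i _ => hvol (y i) (half_pos hδ), Finset.sum_const,
            nsmul_eq_mul]
      _ ≤ μ (ball c (r + 3 * δ / 2) \ ball c (r - δ / 2)) :=
          measure_mono (iUnion₂_subset hsub)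
      _ = ENNReal.ofReal ((r + 3 * δ / 2) ^ d - (r - δ / 2) ^ d) * μ (ball 0 1) := by
          rw [measure_sdiff (ball_subset_ball (by linarith)) measurableSet_ball.nullMeasurableSet
            measure_ball_lt_top.ne, hvol c (by linarith), hvol c (by linarith),
            ← ENNReal.sub_mul fun _ _ => measure_ball_lt_top.ne,
            ← ENNReal.ofReal_sub _ (pow_nonneg (by linarith) d)]
  rw [← mul_assoc, ENNReal.mul_le_mul_iff_left hunit measure_ball_lt_top.ne,
    ← ENNReal.ofReal_natCast, ← ENNReal.ofReal_mul (by positivity)] at hmeasure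
  refine (ENNReal.ofReal_le_ofReal_iff ?_).1 hmeasure
  exact sub_nonneg.2 (pow_le_pow_left₀ (by linarith) (by linarith) d)

theorem card_le_five_pow_mul_of_pairwise_dist_le {s : Finset ι} {y : ι → E} {c : E} {δ x : ℝ}
    (hδ : 0 < δ) (hx : 0 ≤ x)
    (hsep : (s : Set ι).Pairwise fun i j => δ ≤ dist (y i) (y j))
    (hy : ∀ i ∈ s, dist c (y i) ∈ Ico ((x + 1) * δ) ((x + 2) * δ)) :
    (s.card : ℝ) ≤ 5 ^ finrank ℝ E * ((x + 1) ^ finrank ℝ E - x ^ finrank ℝ E) := by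
  have hpack := card_mul_pow_le_of_pairwise_dist_le hδ (by nlinarith) hsep
    fun i hi => ⟨(hy i hi).1, by linarith [(hy i hi).2]⟩
  have hscale : ∀ z : ℝ, ((x + 1) * δ + z * δ / 2) ^ finrank ℝ E =
      (2 * x + 2 + z) ^ finrank ℝ E * (δ / 2) ^ finrank ℝ E := fun z => by
    rw [← mul_pow]; ring_nf
  rw [hscale 3, show (x + 1) * δ - δ / 2 = (x + 1) * δ + (-1) * δ / 2 by ring, hscale (-1),
    ← sub_mul, mul_le_mul_iff_left₀ (by positivity)] at hpack
  calc (s.card : ℝ) ≤ _ := hpack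
    _ = (2 * x + 5) ^ finrank ℝ E - (2 * x + 1) ^ finrank ℝ E := by ring_nf
    _ ≤ _ := two_mul_add_five_pow_sub_le _ hx

theorem card_mul_le_integral_of_pairwise_dist_le {f : ℝ → ℝ} {s : Finset ι} {y : ι → E}
    {c : E} {δ x : ℝ} (hδ : 0 < δ) (hx : 0 ≤ x)
    (hf : AntitoneOn f (Icc (x * δ) ((x + 1) * δ))) (hf_nonneg : 0 ≤ f ((x + 1) * δ))
    (hsep : (s : Set ι).Pairwise fun i j => δ ≤ dist (y i) (y j))
    (hy : ∀ i ∈ s, dist c (y i) ∈ Ico ((x + 1) * δ) ((x + 2) * δ)) :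
    s.card * f ((x + 1) * δ) ≤ finrank ℝ E * (5 / δ) ^ finrank ℝ E *
      ∫ t in x * δ..(x + 1) * δ, t ^ (finrank ℝ E - 1) * f t := by
  set d := finrank ℝ E
  calc s.card * f ((x + 1) * δ) ≤ 5 ^ d * ((x + 1) ^ d - x ^ d) * f ((x + 1) * δ) := by
        gcongr
        exact card_le_five_pow_mul_of_pairwise_dist_le hδ hx hsep hy
    _ = (5 / δ) ^ d * ((((x + 1) * δ) ^ d - (x * δ) ^ d) * f ((x + 1) * δ)) := by
        rw [div_pow, mul_pow, mul_pow]
        field_simp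
    _ ≤ (5 / δ) ^ d * (d * ∫ t in x * δ..(x + 1) * δ, t ^ (d - 1) * f t) := by
        exact mul_le_mul_of_nonneg_left
          (pow_sub_pow_mul_le_integral d (by positivity) (by gcongr; linarith) hf) (by positivity)
    _ = d * (5 / δ) ^ d * ∫ t in x * δ..(x + 1) * δ, t ^ (d - 1) * f t := by ring

theorem sum_le_mul_integral_of_pairwise_dist_le {f : ℝ → ℝ} (hf : AntitoneOn f (Ici 0))
    (hf_nonneg : ∀ t, 0 < t → 0 ≤ f t)
    (hint : IntegrableOn (fun t => t ^ (finrank ℝ E - 1) * f t) (Ioi 0))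
    {s : Finset ι} {y : ι → E} {c : E} {δ : ℝ} (hδ : 0 < δ)
    (hsep : (s : Set ι).Pairwise fun i j => δ ≤ dist (y i) (y j))
    (hc : ∀ i ∈ s, δ ≤ dist c (y i)) :
    ∑ i ∈ s, f (dist c (y i)) ≤
      finrank ℝ E * (5 / δ) ^ finrank ℝ E * ∫ t in Ioi 0, t ^ (finrank ℝ E - 1) * f t := by
  set d := finrank ℝ E
  let m : ι → ℕ := fun i => ⌊dist c (y i) / δ - 1⌋₊
  have hm : ∀ i ∈ s, dist c (y i) ∈ Ico ((m i + 1) * δ) ((m i + 2) * δ) :=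
    fun i hi => mem_Ico_floor_div_sub_one_mul hδ (hc i hi)
  have hmaps : ∀ i ∈ s, m i ∈ Finset.range (s.sup m + 1) :=
    fun i hi => Finset.mem_range.2 (Nat.lt_succ_of_le (Finset.le_sup hi))
  calc ∑ i ∈ s, f (dist c (y i))
      ≤ ∑ i ∈ s, f ((m i + 1) * δ) := Finset.sum_le_sum fun i hi =>
        hf (mem_Ici.2 (by positivity)) (mem_Ici.2 dist_nonneg) (hm i hi).1
    _ = ∑ k ∈ Finset.range (s.sup m + 1), (s.filter (m · = k)).card * f ((k + 1) * δ) := by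
        rw [← Finset.sum_fiberwise_of_maps_to hmaps]
        refine Finset.sum_congr rfl fun k _ => ?_
        rw [Finset.sum_congr rfl fun i hi => by rw [(Finset.mem_filter.1 hi).2], Finset.sum_const,
          nsmul_eq_mul]
    _ ≤ ∑ k ∈ Finset.range (s.sup m + 1),
          d * (5 / δ) ^ d * ∫ t in k * δ..(k + 1) * δ, t ^ (d - 1) * f t := by
        refine Finset.sum_le_sum fun k _ => card_mul_le_integral_of_pairwise_dist_le
          (s := s.filter (m · = k)) (c := c) hδ k.cast_nonneg
          (hf.mono fun t ht => le_trans (by positivity) ht.1) (hf_nonneg _ (by positivity))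
          (hsep.mono (Finset.coe_subset.2 (Finset.filter_subset _ _))) fun i hi => ?_
        obtain ⟨his, rfl⟩ := Finset.mem_filter.1 hi
        exact hm i his
    _ ≤ d * (5 / δ) ^ d * ∫ t in Ioi 0, t ^ (d - 1) * f t := by
        rw [← Finset.mul_sum]
        gcongr
        exact sum_intervalIntegral_le_integral_Ioi (fun t ht =>
          mul_nonneg (pow_nonneg ht.le _) (hf_nonneg t ht)) hint hδ.le _

theorem sum_le_one_add_mul_integral_of_pairwise_dist_le [DecidableEq ι] {f : ℝ → ℝ}
    (hf : AntitoneOn f (Ici 0)) (hf_nonneg : ∀ t, 0 ≤ t → 0 ≤ f t) (hf0 : f 0 = 1)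
    (hint : IntegrableOn (fun t => t ^ (finrank ℝ E - 1) * f t) (Ioi 0))
    {y : ι → E} {δ : ℝ} (hδ : 0 < δ) (hsep : Pairwise fun i j => δ ≤ dist (y i) (y j))
    (i : ι) (s : Finset ι) :
    ∑ j ∈ s, f (dist (y i) (y j)) ≤
      1 + finrank ℝ E * (5 / δ) ^ finrank ℝ E *
        ∫ t in Ioi 0, t ^ (finrank ℝ E - 1) * f t :=
  calc ∑ j ∈ s, f (dist (y i) (y j))
      ≤ ∑ j ∈ insert i (s.erase i), f (dist (y i) (y j)) :=
        Finset.sum_le_sum_of_subset_of_nonneg (Finset.insert_erase_subset i s)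
          fun j _ _ => hf_nonneg _ dist_nonneg
    _ = 1 + ∑ j ∈ s.erase i, f (dist (y i) (y j)) := by
        rw [Finset.sum_insert (Finset.notMem_erase i s), dist_self, hf0]
    _ ≤ _ := by
        gcongr
        exact sum_le_mul_integral_of_pairwise_dist_le hf (fun t ht => hf_nonneg t ht.le) hint hδ
          (hsep.set_pairwise _) fun j hj => hsep (Finset.ne_of_mem_erase hj).symm

end Packing

theorem schoenberg_bounded_general (n : ℕ) (f : ℝ → ℝ) (hpos : ∀ t, 0 ≤ t → 0 ≤ f t)
    (hmono : AntitoneOn f (Set.Ici (0 : ℝ))) (hf0 : f 0 = 1)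
    (X : ℕ → EuclideanSpace ℝ (Fin n))
    (hsep : 0 < sInf {r : ℝ | ∃ i j : ℕ, i ≠ j ∧ r = dist (X i) (X j)})
    (d : ℕ) (hd : Module.finrank ℝ (Submodule.span ℝ (Set.range X)) = d)
    (hint : IntegrableOn (fun t : ℝ => t ^ (d - 1) * f t) (Set.Ioi 0)) :
    ∃ T : lp (fun _ : ℕ => ℝ) 2 →L[ℝ] lp (fun _ : ℕ => ℝ) 2,
      IsSelfAdjoint T ∧
      (∀ i j : ℕ, inner ℝ (T (lp.single 2 i (1 : ℝ))) (lp.single 2 j (1 : ℝ)) =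
        f (dist (X i) (X j))) ∧
      ‖T‖ ≤ 1 + (d : ℝ) ^ 2 *
          (5 / sInf {r : ℝ | ∃ i j : ℕ, i ≠ j ∧ r = dist (X i) (X j)}) ^ d *
          ∫ t in Set.Ioi (0 : ℝ), t ^ (d - 1) * f t := by
  subst hd
  set δ := sInf {r : ℝ | ∃ i j : ℕ, i ≠ j ∧ r = dist (X i) (X j)}
  set V := Submodule.span ℝ (Set.range X)
  set I := ∫ t in Ioi (0 : ℝ), t ^ (finrank ℝ V - 1) * f t
  have hX : Pairwise fun i j => δ ≤ dist (X i) (X j) := fun i j hij =>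
    csInf_le ⟨0, by rintro _ ⟨i, j, -, rfl⟩; exact dist_nonneg⟩ ⟨i, j, hij, rfl⟩
  have hI : 0 ≤ I := setIntegral_nonneg measurableSet_Ioi fun t ht =>
    mul_nonneg (pow_nonneg ht.le _) (hpos t ht.le)
  have hd : (finrank ℝ V : ℝ) ≤ finrank ℝ V ^ 2 := mod_cast Nat.le_self_pow two_ne_zero _
  -- Inside the span of `X`, the dimension of the ambient space is `d`.
  let Y : ℕ → V := fun j => ⟨X j, Submodule.subset_span ⟨j, rfl⟩⟩
  have hrow (i : ℕ) (s : Finset ℕ) : ∑ j ∈ s, f (dist (X i) (X j)) ≤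
      1 + (finrank ℝ V : ℝ) ^ 2 * (5 / δ) ^ finrank ℝ V * I := by
    refine (sum_le_one_add_mul_integral_of_pairwise_dist_le (y := Y) hmono hpos hf0 hint hsep hX
      i s).trans ?_
    have := hsep.le
    gcongr
  have hsymm (i j : ℕ) : f (dist (X i) (X j)) = f (dist (X j) (X i)) := by rw [dist_comm]
  have hM : 0 ≤ 1 + (finrank ℝ V : ℝ) ^ 2 * (5 / δ) ^ finrank ℝ V * I := by
    have := hsep.le
    positivity
  refine ⟨schurOperator _ (fun i j => hpos _ dist_nonneg) hsymm hrow hM,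
    isSelfAdjoint_schurOperator .., fun i j => ?_, norm_schurOperator_le ..⟩
  rw [inner_schurOperator_single, dist_comm]

/-- Boundedness of the Schoenberg operator: if `f` is nonnegative monotone decreasing with
`f 0 = 1`, `X` is separated with linear span of dimension `d`, and `t^{d-1} f ∈ L¹(ℝ₊)`,
then the Schoenberg matrix `‖f(|x_i - x_j|)‖` defines a bounded self-adjoint operator on `ℓ²`
with `‖S_X(f)‖ ≤ 1 + d² (5/d_*(X))^d ∫_0^∞ t^{d-1} f(t) dt`. -/
theorem schoenberg_bounded (n : ℕ) (f : ℝ → ℝ) (hpos : ∀ t, 0 ≤ t → 0 ≤ f t)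
    (hmono : AntitoneOn f (Set.Ici (0 : ℝ))) (hf0 : f 0 = 1)
    (X : ℕ → EuclideanSpace ℝ (Fin n)) (hinj : Function.Injective X)
    (hsep : 0 < sInf {r : ℝ | ∃ i j : ℕ, i ≠ j ∧ r = dist (X i) (X j)})
    (d : ℕ) (hd : Module.finrank ℝ (Submodule.span ℝ (Set.range X)) = d)
    (hint : IntegrableOn (fun t : ℝ => t ^ (d - 1) * f t) (Set.Ioi 0)) :
    ∃ T : lp (fun _ : ℕ => ℝ) 2 →L[ℝ] lp (fun _ : ℕ => ℝ) 2,
      IsSelfAdjoint T ∧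
      (∀ i j : ℕ, inner ℝ (T (lp.single 2 i (1 : ℝ))) (lp.single 2 j (1 : ℝ)) =
        f (dist (X i) (X j))) ∧
      ‖T‖ ≤ 1 + (d : ℝ) ^ 2 *
          (5 / sInf {r : ℝ | ∃ i j : ℕ, i ≠ j ∧ r = dist (X i) (X j)}) ^ d *
          ∫ t in Set.Ioi (0 : ℝ), t ^ (d - 1) * f t :=
  schoenberg_bounded_general n f hpos hmono hf0 X hsep d hd hint
end

section
/- Let $f$ be a completely monotone function on $(0,\infty)$ with $f(0^+)=1$, represented as $f(t)=\int_0^\infty e^{-st}\,\tau(ds)$ for a probability measure $\tau$ on $[0,\infty)$. Then for any $\xi,\eta\in\mathbb{R}^n$ there exists $C=C(f,\xi,\eta)>0$ such that $f(|x-\xi|) \le C f(|x-\eta|)$ for all $x\in\mathbb{R}^n$. Moreover one may take $C = 2e^{a|\xi-\eta|}$ where $a>0$ is chosen so that $\tau([0,a]) > 1/2$. -/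
/-!
Split `τ` at `a`. Since `τ([0,a]) ≥ τ((a,∞))` and `e^{-st}` is decreasing in `s`, the tail
`∫_{(a,∞)} e^{-st} dτ` is at most `e^{-at} τ((a,∞)) ≤ e^{-at} τ([0,a])`, hence at most the head
`∫_{[0,a]} e^{-st} dτ`; so `f(t)` is at most twice its head. On `[0,a]`, replacing `t` by
`t' ≤ t + D` costs at most the factor `e^{sD} ≤ e^{aD}`.
-/

open Set MeasureTheory Real

namespace LaplaceShift

variable {μ : Measure ℝ} {a t t' D : ℝ}

lemma integrable_exp_neg_mul [IsFiniteMeasure μ] (hμ : ∀ᵐ s ∂μ, 0 ≤ s) (ht : 0 ≤ t) :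
    Integrable (fun s ↦ exp (-(s * t))) μ := by
  refine .of_bound (by fun_prop) 1 ?_
  filter_upwards [hμ] with s hs
  rw [norm_of_nonneg (exp_pos _).le, exp_le_one_iff, neg_nonpos]
  positivity

lemma setIntegral_compl_Icc_exp_neg_mul_le [IsFiniteMeasure μ] (hμ : ∀ᵐ s ∂μ, 0 ≤ s)
    (ht : 0 ≤ t) (hmass : μ.real (Icc 0 a)ᶜ ≤ μ.real (Icc 0 a)) :
    ∫ s in (Icc 0 a)ᶜ, exp (-(s * t)) ∂μ ≤ ∫ s in Icc 0 a, exp (-(s * t)) ∂μ := by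
  have hint := integrable_exp_neg_mul hμ ht
  calc ∫ s in (Icc 0 a)ᶜ, exp (-(s * t)) ∂μ
      ≤ ∫ _ in (Icc 0 a)ᶜ, exp (-(a * t)) ∂μ := by
        refine setIntegral_mono_on_ae hint.integrableOn (integrable_const _).integrableOn
          measurableSet_Icc.compl ?_
        filter_upwards [hμ] with s hs hsa
        have : a ≤ s := (not_le.mp fun h ↦ hsa ⟨hs, h⟩).le
        gcongr
    _ = exp (-(a * t)) * μ.real (Icc 0 a)ᶜ := by rw [setIntegral_const, smul_eq_mul, mul_comm]
    _ ≤ exp (-(a * t)) * μ.real (Icc 0 a) := by gcongr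
    _ ≤ ∫ s in Icc 0 a, exp (-(s * t)) ∂μ :=
        setIntegral_ge_of_const_le_real measurableSet_Icc (measure_ne_top _ _)
          (fun s hs ↦ by have := hs.2; gcongr) hint.integrableOn

lemma integral_exp_neg_mul_le_two_mul_setIntegral_Icc [IsFiniteMeasure μ]
    (hμ : ∀ᵐ s ∂μ, 0 ≤ s) (ht : 0 ≤ t) (hmass : μ.real (Icc 0 a)ᶜ ≤ μ.real (Icc 0 a)) :
    ∫ s, exp (-(s * t)) ∂μ ≤ 2 * ∫ s in Icc 0 a, exp (-(s * t)) ∂μ := by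
  rw [← integral_add_compl measurableSet_Icc (integrable_exp_neg_mul hμ ht)]
  linarith [setIntegral_compl_Icc_exp_neg_mul_le hμ ht hmass]

lemma exp_neg_mul_le_exp_mul_exp_neg_mul {s : ℝ} (hs : s ∈ Icc 0 a) (hD : 0 ≤ D)
    (htt' : t' ≤ t + D) : exp (-(s * t)) ≤ exp (a * D) * exp (-(s * t')) := by
  rw [← exp_add, exp_le_exp]
  nlinarith [hs.1, hs.2, mul_le_mul_of_nonneg_left htt' hs.1]

lemma setIntegral_Icc_exp_neg_mul_le [IsFiniteMeasure μ] (hμ : ∀ᵐ s ∂μ, 0 ≤ s) (ht : 0 ≤ t)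
    (ht' : 0 ≤ t') (hD : 0 ≤ D) (htt' : t' ≤ t + D) :
    ∫ s in Icc 0 a, exp (-(s * t)) ∂μ ≤ exp (a * D) * ∫ s, exp (-(s * t')) ∂μ := by
  have hint' := integrable_exp_neg_mul hμ ht'
  calc ∫ s in Icc 0 a, exp (-(s * t)) ∂μ
      ≤ ∫ s in Icc 0 a, exp (a * D) * exp (-(s * t')) ∂μ :=
        setIntegral_mono_on (integrable_exp_neg_mul hμ ht).integrableOn
          (hint'.const_mul _).integrableOn measurableSet_Icc
          fun s hs ↦ exp_neg_mul_le_exp_mul_exp_neg_mul hs hD htt'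
    _ = exp (a * D) * ∫ s in Icc 0 a, exp (-(s * t')) ∂μ := integral_const_mul _ _
    _ ≤ exp (a * D) * ∫ s, exp (-(s * t')) ∂μ := by
        gcongr ?_ * ?_
        exact setIntegral_le_integral hint' (.of_forall fun _ ↦ (exp_pos _).le)

theorem integral_exp_neg_mul_le_of_le_add [IsFiniteMeasure μ] (hμ : ∀ᵐ s ∂μ, 0 ≤ s)
    (hmass : μ.real (Icc 0 a)ᶜ ≤ μ.real (Icc 0 a)) (ht : 0 ≤ t) (ht' : 0 ≤ t') (hD : 0 ≤ D)
    (htt' : t' ≤ t + D) :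
    ∫ s, exp (-(s * t)) ∂μ ≤ 2 * exp (a * D) * ∫ s, exp (-(s * t')) ∂μ := by
  calc ∫ s, exp (-(s * t)) ∂μ ≤ 2 * ∫ s in Icc 0 a, exp (-(s * t)) ∂μ :=
        integral_exp_neg_mul_le_two_mul_setIntegral_Icc hμ ht hmass
    _ ≤ 2 * (exp (a * D) * ∫ s, exp (-(s * t')) ∂μ) := by
        gcongr
        exact setIntegral_Icc_exp_neg_mul_le hμ ht ht' hD htt'
    _ = 2 * exp (a * D) * ∫ s, exp (-(s * t')) ∂μ := by ring

end LaplaceShift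

theorem cm_shift_comparison_general (n : ℕ) (τ : Measure ℝ) [IsProbabilityMeasure τ]
    (hτsupp : τ (Set.Iio 0) = 0)
    (f : ℝ → ℝ) (hf : ∀ t : ℝ, 0 ≤ t → f t = ∫ s, Real.exp (-(s * t)) ∂τ)
    (ξ η : EuclideanSpace ℝ (Fin n)) (a : ℝ)
    (haτ : 1 / 2 < (τ (Set.Icc 0 a)).toReal) :
    ∀ x : EuclideanSpace ℝ (Fin n),
      f (dist x ξ) ≤ 2 * Real.exp (a * dist ξ η) * f (dist x η) := by
  intro x
  have hτ : ∀ᵐ s ∂τ, 0 ≤ s := by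
    rw [ae_iff]
    simp only [not_le]
    exact hτsupp
  have hmass : τ.real (Icc 0 a)ᶜ ≤ τ.real (Icc 0 a) := by
    rw [probReal_compl_eq_one_sub measurableSet_Icc]
    linarith [show 1 / 2 < τ.real (Icc 0 a) from haτ]
  rw [hf _ dist_nonneg, hf _ dist_nonneg]
  exact LaplaceShift.integral_exp_neg_mul_le_of_le_add hτ hmass dist_nonneg dist_nonneg dist_nonneg
    (dist_triangle x ξ η)

/-- For a completely monotone function `f(t) = ∫_0^∞ e^{-st} τ(ds)` with `τ` a probability
measure on `[0,∞)`, and any `ξ, η ∈ ℝⁿ`: if `a > 0` satisfies `τ([0,a]) > 1/2`, then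
`f(|x-ξ|) ≤ 2 e^{a|ξ-η|} f(|x-η|)` for all `x ∈ ℝⁿ`. -/
theorem cm_shift_comparison (n : ℕ) (τ : Measure ℝ) [IsProbabilityMeasure τ]
    (hτsupp : τ (Set.Iio 0) = 0)
    (f : ℝ → ℝ) (hf : ∀ t : ℝ, 0 ≤ t → f t = ∫ s, Real.exp (-(s * t)) ∂τ)
    (ξ η : EuclideanSpace ℝ (Fin n)) (a : ℝ) (ha : 0 < a)
    (haτ : 1 / 2 < (τ (Set.Icc 0 a)).toReal) :
    ∀ x : EuclideanSpace ℝ (Fin n),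
      f (dist x ξ) ≤ 2 * Real.exp (a * dist ξ η) * f (dist x η) :=
  cm_shift_comparison_general n τ hτsupp f hf ξ η a haτ
end

section
/- Let $f(t) = \int_0^\infty e^{-st^2}\,\sigma(ds)$ where $\sigma$ is a probability measure on $[0,\infty)$ with the doubling property: there is $\kappa>0$ with $\sigma([2u,2v]) \le \kappa\,\sigma([u,v])$ for all $0\le u\le v$. Then for any $\xi,\eta\in\mathbb{R}^n$ there is a constant $C=C(f,\xi,\eta)>0$ such that $f(|x-\xi|) \le C f(|x-\eta|)$ for all $x\in\mathbb{R}^n$. -/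
open Set MeasureTheory NNReal ENNReal

/-!
By the layer-cake formula, `∫ e^{-st²} dσ(s) = ∫_0^∞ σ{s : l ≤ e^{-st²}} dl`, and the level sets
are half-lines `(-∞, -log l / t²]`. Replacing `t` by `2t` divides their endpoints by `4`, so two
applications of the doubling property give `f t ≤ κ² f (2t)` for `t > 0`. With `d = |ξ - η|` and
`f` decreasing, `f |x - η| ≥ f (|x - ξ| + d)`; this is `≥ f (2|x - ξ|) ≥ κ⁻² f |x - ξ|` when
`|x - ξ| > d`, and `≥ f (2d) > 0` otherwise.
-/

theorem lintegral_ofReal_le_mul_of_measure_le {α : Type*} [MeasurableSpace α] {μ : Measure α}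
    {g h : α → ℝ} (hg : 0 ≤ᵐ[μ] g) (hh : 0 ≤ᵐ[μ] h) (hgm : AEMeasurable g μ)
    (hhm : AEMeasurable h μ) (C : ℝ≥0)
    (hle : ∀ l : ℝ, 0 < l → μ {a | l ≤ g a} ≤ C * μ {a | l ≤ h a}) :
    ∫⁻ a, ENNReal.ofReal (g a) ∂μ ≤ C * ∫⁻ a, ENNReal.ofReal (h a) ∂μ := by
  rw [lintegral_eq_lintegral_meas_le μ hg hgm, lintegral_eq_lintegral_meas_le μ hh hhm,
    ← lintegral_const_mul' _ _ coe_ne_top]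
  exact setLIntegral_mono' measurableSet_Ioi hle

theorem measure_Iic_le_mul_measure_Iic_half {σ : Measure ℝ} (hσ : σ (Iio 0) = 0) {κ : ℝ≥0}
    (hdoubling : ∀ u v : ℝ, 0 ≤ u → u ≤ v → σ (Icc (2 * u) (2 * v)) ≤ κ * σ (Icc u v))
    (a : ℝ) : σ (Iic a) ≤ κ * σ (Iic (a / 2)) := by
  rcases lt_or_ge a 0 with ha | ha
  · simp [measure_mono_null (Iic_subset_Iio.mpr ha) hσ]
  calc σ (Iic a) ≤ σ (Iio 0 ∪ Icc 0 a) := measure_mono fun s hs => by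
          rcases lt_or_ge s 0 with h | h
          exacts [Or.inl h, Or.inr ⟨h, hs⟩]
    _ ≤ σ (Icc 0 a) := (measure_union_le _ _).trans (by rw [hσ, zero_add])
    _ ≤ κ * σ (Icc 0 (a / 2)) := by
          simpa [mul_div_cancel₀] using hdoubling 0 (a / 2) le_rfl (by linarith)
    _ ≤ κ * σ (Iic (a / 2)) := by gcongr; exact Icc_subset_Iic_self

theorem setOf_le_exp_neg_mul_sq {l t : ℝ} (hl : 0 < l) (ht : t ≠ 0) :
    {s : ℝ | l ≤ Real.exp (-(s * t ^ 2))} = Iic (-Real.log l / t ^ 2) := by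
  ext s
  rw [mem_ofPred_eq, mem_Iic, ← Real.log_le_iff_le_exp hl, le_div_iff₀ (by positivity)]
  constructor <;> intro h <;> linarith

theorem ae_nonneg_of_measure_Iio_zero_eq_zero {σ : Measure ℝ} (hσ : σ (Iio 0) = 0) :
    ∀ᵐ s ∂σ, 0 ≤ s :=
  measure_mono_null (fun s (hs : ¬0 ≤ s) => not_le.mp hs) hσ

noncomputable def gaussianMixture (σ : Measure ℝ) (t : ℝ) : ℝ := ∫ s, Real.exp (-(s * t ^ 2)) ∂σ

section GaussianMixture

variable {σ : Measure ℝ}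

theorem integrable_exp_neg_mul_sq_of_ae_nonneg [IsFiniteMeasure σ] (hσ : ∀ᵐ s ∂σ, 0 ≤ s)
    (t : ℝ) :
    Integrable (fun s => Real.exp (-(s * t ^ 2))) σ := by
  refine (integrable_const (1 : ℝ)).mono' (by fun_prop) (hσ.mono fun s hs => ?_)
  rw [Real.norm_of_nonneg (Real.exp_pos _).le, Real.exp_le_one_iff]
  have := mul_nonneg hs (sq_nonneg t)
  linarith

theorem gaussianMixture_pos [IsFiniteMeasure σ] [NeZero σ] (hσ : ∀ᵐ s ∂σ, 0 ≤ s) (t : ℝ) :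
    0 < gaussianMixture σ t :=
  integral_exp_pos (integrable_exp_neg_mul_sq_of_ae_nonneg hσ t)

theorem gaussianMixture_antitoneOn [IsFiniteMeasure σ] (hσ : ∀ᵐ s ∂σ, 0 ≤ s) :
    AntitoneOn (gaussianMixture σ) (Ici 0) := by
  intro t₁ ht₁ t₂ _ ht
  refine integral_mono_ae (integrable_exp_neg_mul_sq_of_ae_nonneg hσ t₂)
    (integrable_exp_neg_mul_sq_of_ae_nonneg hσ t₁) (hσ.mono fun s hs => Real.exp_le_exp.mpr ?_)
  have : t₁ ^ 2 ≤ t₂ ^ 2 := pow_le_pow_left₀ ht₁ ht 2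
  nlinarith

theorem gaussianMixture_le_mul_two_mul [IsFiniteMeasure σ] (hσ : σ (Iio 0) = 0) {κ : ℝ≥0}
    (hdoubling : ∀ u v : ℝ, 0 ≤ u → u ≤ v → σ (Icc (2 * u) (2 * v)) ≤ κ * σ (Icc u v))
    {t : ℝ} (ht : t ≠ 0) : gaussianMixture σ t ≤ κ ^ 2 * gaussianMixture σ (2 * t) := by
  have hσ' := ae_nonneg_of_measure_Iio_zero_eq_zero hσ
  have hnonneg (r : ℝ) : 0 ≤ᵐ[σ] fun s => Real.exp (-(s * r ^ 2)) :=
    ae_of_all _ fun s => (Real.exp_pos _).le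
  have hlintegral : ∫⁻ s, ENNReal.ofReal (Real.exp (-(s * t ^ 2))) ∂σ ≤
      ↑(κ ^ 2) * ∫⁻ s, ENNReal.ofReal (Real.exp (-(s * (2 * t) ^ 2))) ∂σ := by
    refine lintegral_ofReal_le_mul_of_measure_le (hnonneg t) (hnonneg (2 * t)) (by fun_prop)
      (by fun_prop) _ fun l hl => ?_
    rw [setOf_le_exp_neg_mul_sq hl ht, setOf_le_exp_neg_mul_sq hl (mul_ne_zero two_ne_zero ht),
      ENNReal.coe_pow, sq (κ : ℝ≥0∞), mul_assoc]
    calc σ (Iic (-Real.log l / t ^ 2))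
        ≤ κ * (κ * σ (Iic (-Real.log l / t ^ 2 / 2 / 2))) :=
          (measure_Iic_le_mul_measure_Iic_half hσ hdoubling _).trans
            (by gcongr; exact measure_Iic_le_mul_measure_Iic_half hσ hdoubling _)
      _ = κ * (κ * σ (Iic (-Real.log l / (2 * t) ^ 2))) := by ring_nf
  have hG2 : 0 ≤ gaussianMixture σ (2 * t) := integral_nonneg fun _ => (Real.exp_pos _).le
  rwa [← NNReal.coe_pow, ← ENNReal.ofReal_le_ofReal_iff (by positivity),
    ENNReal.ofReal_mul (by positivity), ENNReal.ofReal_coe_nnreal, gaussianMixture,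
    gaussianMixture, ofReal_integral_eq_lintegral_ofReal
    (integrable_exp_neg_mul_sq_of_ae_nonneg hσ' t) (hnonneg t),
    ofReal_integral_eq_lintegral_ofReal (integrable_exp_neg_mul_sq_of_ae_nonneg hσ' _)
    (hnonneg _)]

end GaussianMixture

theorem exists_forall_le_mul_add_of_le_mul_two_mul {F : ℝ → ℝ} (hanti : AntitoneOn F (Ici 0))
    (hpos : ∀ t, 0 ≤ t → 0 < F t) {K : ℝ} (hK : ∀ t, 0 < t → F t ≤ K * F (2 * t))
    {d : ℝ} (hd : 0 ≤ d) : ∃ C, 0 < C ∧ ∀ t, 0 ≤ t → F t ≤ C * F (t + d) := by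
  have hmono {s u : ℝ} (hs : 0 ≤ s) (hsu : s ≤ u) : F u ≤ F s := hanti hs (hs.trans hsu) hsu
  have h2d := hpos (2 * d) (by positivity)
  set C := max K (F 0 / F (2 * d))
  have hC : 0 < C := lt_max_of_lt_right (div_pos (hpos 0 le_rfl) h2d)
  refine ⟨C, hC, fun t ht => ?_⟩
  rcases le_or_gt t d with htd | hdt
  · -- `t + d` stays in `[0, 2d]`, where `F` is bounded below by `F (2d) > 0`.
    calc F t ≤ F 0 := hmono le_rfl ht
      _ = F 0 / F (2 * d) * F (2 * d) := (div_mul_cancel₀ _ h2d.ne').symm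
      _ ≤ C * F (t + d) := by
        gcongr
        exacts [le_max_right _ _, hmono (by positivity) (by linarith)]
  · calc F t ≤ K * F (2 * t) := hK t (hd.trans_lt hdt)
      _ ≤ C * F (t + d) := by
        gcongr
        exacts [(hpos _ (by positivity)).le, le_max_left _ _, hmono (by positivity) (by linarith)]

theorem gaussian_mixture_shift_comparison_general (n : ℕ) (σ : Measure ℝ) [IsProbabilityMeasure σ]
    (hσsupp : σ (Set.Iio 0) = 0)
    (κ : ℝ≥0)
    (hdoubling : ∀ u v : ℝ, 0 ≤ u → u ≤ v →
      σ (Set.Icc (2 * u) (2 * v)) ≤ κ * σ (Set.Icc u v))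
    (f : ℝ → ℝ) (hf : ∀ t : ℝ, 0 ≤ t → f t = ∫ s, Real.exp (-(s * t ^ 2)) ∂σ)
    (ξ η : EuclideanSpace ℝ (Fin n)) :
    ∃ C : ℝ, 0 < C ∧ ∀ x : EuclideanSpace ℝ (Fin n),
      f (dist x ξ) ≤ C * f (dist x η) := by
  have hσ := ae_nonneg_of_measure_Iio_zero_eq_zero hσsupp
  obtain ⟨C, hC, hshift⟩ := exists_forall_le_mul_add_of_le_mul_two_mul
    (gaussianMixture_antitoneOn hσ) (fun t _ => gaussianMixture_pos hσ t)
    (fun t ht => gaussianMixture_le_mul_two_mul hσsupp hdoubling ht.ne')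
    (dist_nonneg (x := ξ) (y := η))
  refine ⟨C, hC, fun x => ?_⟩
  rw [hf _ dist_nonneg, hf _ dist_nonneg]
  calc gaussianMixture σ (dist x ξ) ≤ C * gaussianMixture σ (dist x ξ + dist ξ η) :=
        hshift _ dist_nonneg
    _ ≤ C * gaussianMixture σ (dist x η) :=
        mul_le_mul_of_nonneg_left (gaussianMixture_antitoneOn hσ dist_nonneg
          (add_nonneg dist_nonneg dist_nonneg) (dist_triangle _ _ _)) hC.le

/-- For `f(t) = ∫_0^∞ e^{-st²} σ(ds)` with `σ` a probability measure on `[0,∞)` having the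
doubling property `σ([2u,2v]) ≤ κ σ([u,v])`, and any `ξ, η ∈ ℝⁿ`, there is `C > 0` such that
`f(|x-ξ|) ≤ C f(|x-η|)` for all `x ∈ ℝⁿ`. -/
theorem gaussian_mixture_shift_comparison (n : ℕ) (σ : Measure ℝ) [IsProbabilityMeasure σ]
    (hσsupp : σ (Set.Iio 0) = 0)
    (κ : ℝ≥0) (hκ : 0 < κ)
    (hdoubling : ∀ u v : ℝ, 0 ≤ u → u ≤ v →
      σ (Set.Icc (2 * u) (2 * v)) ≤ κ * σ (Set.Icc u v))
    (f : ℝ → ℝ) (hf : ∀ t : ℝ, 0 ≤ t → f t = ∫ s, Real.exp (-(s * t ^ 2)) ∂σ)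
    (ξ η : EuclideanSpace ℝ (Fin n)) :
    ∃ C : ℝ, 0 < C ∧ ∀ x : EuclideanSpace ℝ (Fin n),
      f (dist x ξ) ≤ C * f (dist x η) :=
  gaussian_mixture_shift_comparison_general n σ hσsupp κ hdoubling f hf ξ η
end

section
/- Suppose the Schoenberg matrix of a function $f\in\Phi_n$ (radial positive definite on $\mathbb{R}^n$) defines a densely defined symmetric operator $S_X(f)$ on $\ell^2$ satisfying $\langle S_X(f)h, h\rangle \ge c\|h\|^2$ for some $c>0$ and all $h$ in its domain (which contains all finite vectors). Then $X$ is separated: $\inf_{k\ne j}|x_k-x_j| > 0$. More precisely, $f(|x_k-x_j|) \le f(0) - c$ for all $k\ne j$. -/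
open Set

/-- If the (minimal symmetric) Schoenberg operator of `f ∈ Φ_n` is positive definite,
i.e. `⟨S_X(f) h, h⟩ ≥ c ‖h‖²` on finite vectors for some `c > 0`, then
`f(|x_k - x_j|) ≤ f(0) - c` for `k ≠ j`, and `X` is separated. -/
theorem schoenberg_positive_implies_separated (n : ℕ) (f : ℝ → ℝ)
    (hfcont : ContinuousWithinAt f (Set.Ici (0 : ℝ)) 0)
    (hΦ : ∀ (m : ℕ) (y : Fin m → EuclideanSpace ℝ (Fin n)) (ξ : Fin m → ℂ),
      0 ≤ (∑ k : Fin m, ∑ j : Fin m,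
        (f (dist (y k) (y j)) : ℂ) * ξ j * starRingEnd ℂ (ξ k)).re)
    (X : ℕ → EuclideanSpace ℝ (Fin n)) (c : ℝ) (hc : 0 < c)
    (hpos : ∀ ξ : ℕ →₀ ℂ,
      c * ∑ k ∈ ξ.support, ‖ξ k‖ ^ 2 ≤
        (∑ k ∈ ξ.support, ∑ j ∈ ξ.support,
          (f (dist (X k) (X j)) : ℂ) * ξ j * starRingEnd ℂ (ξ k)).re) :
    (∀ k j : ℕ, k ≠ j → f (dist (X k) (X j)) ≤ f 0 - c) ∧
    ∃ δ : ℝ, 0 < δ ∧ ∀ k j : ℕ, k ≠ j → δ ≤ dist (X k) (X j) := by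
  have key : ∀ k j : ℕ, k ≠ j → f (dist (X k) (X j)) ≤ f 0 - c := by
    intro k j hkj
    set ξ : ℕ →₀ ℂ := Finsupp.single k 1 + Finsupp.single j (-1) with hξ
    have hk : ξ k = 1 := by simp [hξ, Finsupp.single_apply, hkj, hkj.symm]
    have hj : ξ j = -1 := by simp [hξ, Finsupp.single_apply, hkj, hkj.symm]
    have hother : ∀ a, a ≠ k → a ≠ j → ξ a = 0 := by
      intro a h1 h2
      simp [hξ, Finsupp.single_apply, h1.symm, h2.symm]
    have hsupp : ξ.support = {k, j} := by
      ext a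
      rcases eq_or_ne a k with rfl | hak
      · simp [Finsupp.mem_support_iff, hk]
      · rcases eq_or_ne a j with rfl | haj
        · simp [Finsupp.mem_support_iff, hj]
        · simp [Finsupp.mem_support_iff, hother a hak haj, hak, haj]
    have h := hpos ξ
    rw [hsupp] at h
    simp only [Finset.sum_pair hkj, hk, hj] at h
    rw [dist_self, dist_self, dist_comm (X j) (X k)] at h
    simp only [map_one, map_neg, mul_one, mul_neg, neg_neg, one_mul] at h
    have : c * (1 + 1) ≤ (2 * (f 0 : ℂ) - 2 * (f (dist (X k) (X j)) : ℂ)).re := by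
      convert h using 2
      · norm_num
      · push_cast; ring
    simp only [Complex.sub_re, Complex.mul_re, Complex.ofReal_re, Complex.ofReal_im] at this
    norm_num at this
    linarith
  refine ⟨key, ?_⟩
  have hlt : f 0 - c < f 0 := by linarith
  have hev : ∀ᶠ r in nhdsWithin 0 (Set.Ici (0:ℝ)), f 0 - c < f r :=
    hfcont.eventually (eventually_gt_nhds hlt)
  obtain ⟨δ, hδ, hball⟩ := Metric.mem_nhdsWithin_iff.mp hev
  refine ⟨δ, hδ, fun k j hkj => ?_⟩
  by_contra hlt'
  push_neg at hlt'
  have h1 : f 0 - c < f (dist (X k) (X j)) := by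
    refine hball ⟨?_, dist_nonneg⟩
    simpa [Real.dist_eq, abs_of_nonneg dist_nonneg] using hlt'
  have h2 := key k j hkj
  linarith
end

section
/- For every $a>0$ and all $\xi,\eta\in\mathbb{R}^3$ with $\xi\ne\eta$, $e^{-a|\xi-\eta|} = \frac{a}{2\pi}\int_{\mathbb{R}^3} \frac{e^{-a|x-\xi|}}{|x-\xi|}\cdot\frac{e^{-a|x-\eta|}}{|x-\eta|}\,dx$. -/
open Real Set MeasureTheory
open scoped ENNReal

/-!
Move `ξ` to `0` and `η` to `R e₀`, `R = |ξ - η|`, by an isometry, and integrate in prolate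
spheroidal coordinates with foci `ξ, η`: `u = |x - ξ| + |x - η| ∈ (R, ∞)`,
`v = |x - ξ| - |x - η| ∈ (-R, R)` and the angle around the axis. After integrating out the angle,
Lebesgue measure becomes `π (u² - v²) / (4R) du dv`. As `|x - ξ| |x - η| = (u² - v²) / 4` and
`|x - ξ| + |x - η| = u`, the integrand times this density is `(π / R) e^{-a u}`, whose integral is
`(π / R) · 2R · e^{-a R} / a = 2π e^{-a R} / a`.
-/

noncomputable section

theorem lintegral_Ioi_comp_sq (h : ℝ → ℝ≥0∞) :
    ∫⁻ r in Ioi 0, ENNReal.ofReal (2 * r) * h (r ^ 2) = ∫⁻ w in Ioi 0, h w := by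
  have himage : (fun r : ℝ => r ^ 2) '' Ioi 0 = Ioi 0 := by
    ext w
    refine ⟨?_, fun hw => ⟨√w, Real.sqrt_pos.2 hw, Real.sq_sqrt (le_of_lt hw)⟩⟩
    rintro ⟨r, hr, rfl⟩
    exact pow_pos (mem_Ioi.1 hr) 2
  conv_rhs => rw [← himage, lintegral_image_eq_lintegral_abs_deriv_mul measurableSet_Ioi
    (fun r _ => (hasDerivAt_pow 2 r).hasDerivWithinAt)
    ((pow_left_strictMonoOn₀ two_ne_zero).injOn.mono fun r hr => le_of_lt hr) h]
  symm
  refine setLIntegral_congr_fun measurableSet_Ioi fun r hr => ?_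
  rw [abs_of_pos (by have := mem_Ioi.1 hr; positivity)]
  norm_num

theorem lintegral_comp_sq_add_sq {h : ℝ → ℝ≥0∞} (hh : Measurable h) :
    ∫⁻ q : ℝ × ℝ, h (q.1 ^ 2 + q.2 ^ 2) = ENNReal.ofReal π * ∫⁻ w in Ioi 0, h w := by
  have hpolar : ∀ p : ℝ × ℝ, (polarCoord.symm p).1 ^ 2 + (polarCoord.symm p).2 ^ 2 = p.1 ^ 2 := by
    intro p
    simp only [polarCoord_symm_apply]
    linear_combination p.1 ^ 2 * cos_sq_add_sin_sq p.2
  rw [← lintegral_comp_polarCoord_symm, polarCoord_target, ← lintegral_Ioi_comp_sq]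
  simp only [hpolar, smul_eq_mul]
  rw [Measure.volume_eq_prod, ← Measure.prod_restrict,
    lintegral_prod _ (by fun_prop), ← lintegral_const_mul _ (by fun_prop)]
  refine lintegral_congr fun r => ?_
  simp only [lintegral_const, Measure.restrict_apply_univ, Real.volume_Ioo]
  rw [sub_neg_eq_add, ← two_mul, ENNReal.ofReal_mul zero_le_two, ENNReal.ofReal_mul zero_le_two]
  ring

theorem EuclideanSpace.lintegral_fin_three_eq_lintegral_prod (g : EuclideanSpace ℝ (Fin 3) → ℝ≥0∞) :
    ∫⁻ x, g x = ∫⁻ p : ℝ × ℝ × ℝ, g !₂[p.1, p.2.1, p.2.2] := by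
  let e : ℝ × ℝ × ℝ ≃ᵐ EuclideanSpace ℝ (Fin 3) :=
    ((MeasurableEquiv.refl ℝ).prodCongr MeasurableEquiv.finTwoArrow.symm).trans
      ((MeasurableEquiv.piFinSuccAbove (fun _ => ℝ) 0).symm.trans (MeasurableEquiv.toLp 2 _))
  have he : MeasurePreserving e :=
    ((MeasurePreserving.id volume).prod (volume_preserving_finTwoArrow ℝ).symm).trans
      ((volume_preserving_piFinSuccAbove (fun _ => ℝ) 0).symm.trans (PiLp.volume_preserving_toLp _))
  have he_apply : ∀ p, e p = !₂[p.1, p.2.1, p.2.2] := by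
    intro p
    ext i
    fin_cases i <;> rfl
  rw [← he.lintegral_comp_emb e.measurableEmbedding]
  simp only [he_apply]

theorem EuclideanSpace.lintegral_fin_three_cylindrical {G : ℝ → ℝ → ℝ≥0∞}
    (hG : Measurable (Function.uncurry G)) :
    ∫⁻ x : EuclideanSpace ℝ (Fin 3), G (x 0) (x 1 ^ 2 + x 2 ^ 2)
      = ENNReal.ofReal π * ∫⁻ q in univ ×ˢ Ioi 0, G q.1 q.2 := by
  rw [EuclideanSpace.lintegral_fin_three_eq_lintegral_prod, Measure.volume_eq_prod]
  simp only [Fin.isValue, Matrix.cons_val_zero, Matrix.cons_val_one, Matrix.cons_val]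
  have hG' : Measurable fun p : ℝ × ℝ × ℝ => G p.1 (p.2.1 ^ 2 + p.2.2 ^ 2) :=
    hG.comp (measurable_fst.prodMk (by fun_prop))
  rw [lintegral_prod _ hG'.aemeasurable, Measure.volume_eq_prod,
    setLIntegral_prod (fun q : ℝ × ℝ => G q.1 q.2) hG.aemeasurable.restrict, Measure.restrict_univ,
    ← lintegral_const_mul' _ _ ENNReal.ofReal_ne_top]
  refine lintegral_congr fun z => ?_
  exact lintegral_comp_sq_add_sq (hG.comp (measurable_const.prodMk measurable_id))

theorem lintegral_comp_dist_dist_eq_lintegral_comp_norm_norm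
    {E : Type*} [NormedAddCommGroup E] [InnerProductSpace ℝ E] [FiniteDimensional ℝ E]
    [MeasurableSpace E] [BorelSpace E] (F : ℝ → ℝ → ℝ≥0∞) {ξ η w : E}
    (hw : ‖w‖ = dist ξ η) :
    ∫⁻ x, F (dist x ξ) (dist x η) = ∫⁻ x, F ‖x‖ ‖x - w‖ := by
  let T := Submodule.reflection (ℝ ∙ (w - (η - ξ)))ᗮ
  have hT : T w = η - ξ := Submodule.reflection_sub (by rw [hw, dist_comm, dist_eq_norm])
  let e : E ≃ᵐ E := (T.toHomeomorph.trans (Homeomorph.addRight ξ)).toMeasurableEquiv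
  have he : MeasurePreserving e :=
    (measurePreserving_add_right volume ξ).comp T.measurePreserving
  rw [← he.lintegral_comp_emb e.measurableEmbedding]
  refine lintegral_congr fun x => ?_
  have hdist_ξ : dist (T x + ξ) ξ = ‖x‖ := by
    rw [dist_eq_norm, add_sub_cancel_right, LinearIsometryEquiv.norm_map]
  have hdist_η : dist (T x + ξ) η = ‖x - w‖ := by
    rw [dist_eq_norm, ← T.norm_map (x - w), map_sub, hT]
    congr 1
    abel
  exact congrArg₂ F hdist_ξ hdist_η

/-- The point with elliptic coordinates `(u, v) = (|x| + |x - R e₀|, |x| - |x - R e₀|)` in a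
meridian plane, recorded as `(x₀, x₁² + x₂²)`: with the squared distance to the axis as second
coordinate the map is polynomial. -/
def fromEllipticCoord (R : ℝ) (p : ℝ × ℝ) : ℝ × ℝ :=
  ((p.1 * p.2 + R ^ 2) / (2 * R), (p.1 ^ 2 - R ^ 2) * (R ^ 2 - p.2 ^ 2) / (4 * R ^ 2))

def fderivFromEllipticCoord (R : ℝ) (p : ℝ × ℝ) : ℝ × ℝ →L[ℝ] ℝ × ℝ :=
  (Matrix.toLin (.finTwoProd ℝ) (.finTwoProd ℝ)
    !![p.2 / (2 * R), p.1 / (2 * R);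
      p.1 * (R ^ 2 - p.2 ^ 2) / (2 * R ^ 2), -p.2 * (p.1 ^ 2 - R ^ 2) / (2 * R ^ 2)]
    ).toContinuousLinearMap

section EllipticCoord

variable {R : ℝ}

theorem fromEllipticCoord_fst_sq_add_snd (hR : R ≠ 0) (p : ℝ × ℝ) :
    (fromEllipticCoord R p).1 ^ 2 + (fromEllipticCoord R p).2 = ((p.1 + p.2) / 2) ^ 2 := by
  simp only [fromEllipticCoord]
  field_simp
  ring

theorem fromEllipticCoord_fst_sub_sq_add_snd (hR : R ≠ 0) (p : ℝ × ℝ) :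
    ((fromEllipticCoord R p).1 - R) ^ 2 + (fromEllipticCoord R p).2 = ((p.1 - p.2) / 2) ^ 2 := by
  simp only [fromEllipticCoord]
  field_simp
  ring

theorem hasFDerivAt_fromEllipticCoord (hR : R ≠ 0) (p : ℝ × ℝ) :
    HasFDerivAt (fromEllipticCoord R) (fderivFromEllipticCoord R p) p := by
  unfold fderivFromEllipticCoord
  rw [Matrix.toLin_finTwoProd_toContinuousLinearMap]
  have h1 : HasFDerivAt (fun q : ℝ × ℝ => q.1) (ContinuousLinearMap.fst ℝ ℝ ℝ) p := hasFDerivAt_fst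
  have h2 : HasFDerivAt (fun q : ℝ × ℝ => q.2) (ContinuousLinearMap.snd ℝ ℝ ℝ) p := hasFDerivAt_snd
  have hfst := ((h1.mul h2).add_const (R ^ 2)).mul_const (2 * R)⁻¹
  have hsnd := (((h1.pow 2).sub_const (R ^ 2)).mul ((h2.pow 2).const_sub (R ^ 2))).mul_const
    (4 * R ^ 2)⁻¹
  refine (hfst.prodMk hsnd).congr_fderiv ?_ |>.congr_of_eventuallyEq ?_
  · ext <;> simp <;> field_simp <;> ring
  · exact Filter.Eventually.of_forall fun q => by simp [fromEllipticCoord, div_eq_mul_inv]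

theorem det_fderivFromEllipticCoord (hR : R ≠ 0) (p : ℝ × ℝ) :
    (fderivFromEllipticCoord R p).det = -(p.1 ^ 2 - p.2 ^ 2) / (4 * R) := by
  simp only [fderivFromEllipticCoord, LinearMap.det_toContinuousLinearMap, LinearMap.det_toLin,
    Matrix.det_fin_two_of]
  field_simp
  ring

theorem injOn_fromEllipticCoord (hR : 0 < R) :
    InjOn (fromEllipticCoord R) (Ioi R ×ˢ Ioo (-R) R) := by
  rintro p ⟨hu, hv⟩ q ⟨hu', hv'⟩ h
  simp only [mem_Ioi, mem_Ioo] at hu hv hu' hv'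
  have hsum : (p.1 + p.2) / 2 = (q.1 + q.2) / 2 := by
    refine (pow_left_inj₀ (by linarith) (by linarith) two_ne_zero).1 ?_
    rw [← fromEllipticCoord_fst_sq_add_snd hR.ne', ← fromEllipticCoord_fst_sq_add_snd hR.ne', h]
  have hdiff : (p.1 - p.2) / 2 = (q.1 - q.2) / 2 := by
    refine (pow_left_inj₀ (by linarith) (by linarith) two_ne_zero).1 ?_
    rw [← fromEllipticCoord_fst_sub_sq_add_snd hR.ne',
      ← fromEllipticCoord_fst_sub_sq_add_snd hR.ne', h]
  exact Prod.ext (by linarith) (by linarith)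

theorem image_fromEllipticCoord (hR : 0 < R) :
    fromEllipticCoord R '' (Ioi R ×ˢ Ioo (-R) R) = univ ×ˢ Ioi 0 := by
  refine Subset.antisymm ?_ fun ⟨z, w⟩ ⟨_, hw⟩ => ?_
  · rintro _ ⟨⟨u, v⟩, ⟨hu, hv⟩, rfl⟩
    simp only [mem_Ioi, mem_Ioo] at hu hv
    refine ⟨mem_univ _, ?_⟩
    have hu2 : 0 < u ^ 2 - R ^ 2 := by nlinarith
    have hv2 : 0 < R ^ 2 - v ^ 2 := by nlinarith
    simp only [fromEllipticCoord, mem_Ioi]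
    positivity
  · simp only [mem_Ioi] at hw
    set s := √(z ^ 2 + w)
    set t := √((z - R) ^ 2 + w)
    have hs : s ^ 2 = z ^ 2 + w := Real.sq_sqrt (by positivity)
    have ht : t ^ 2 = (z - R) ^ 2 + w := Real.sq_sqrt (by positivity)
    have hs0 : 0 ≤ s := Real.sqrt_nonneg _
    have ht0 : 0 ≤ t := Real.sqrt_nonneg _
    have hsz : |z| < s := abs_lt_of_sq_lt_sq (by linarith) hs0
    have htz : |z - R| < t := abs_lt_of_sq_lt_sq (by linarith) ht0
    refine ⟨(s + t, s - t), ⟨?_, ?_, ?_⟩, ?_⟩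
    · show R < s + t
      linarith [le_abs_self z, neg_le_abs (z - R)]
    · have : t ^ 2 < (s + R) ^ 2 := by nlinarith [neg_le_abs z]
      linarith [lt_of_pow_lt_pow_left₀ 2 (by positivity) this]
    · have : s ^ 2 < (t + R) ^ 2 := by nlinarith [le_abs_self (z - R)]
      linarith [lt_of_pow_lt_pow_left₀ 2 (by positivity) this]
    · have hfst : (fromEllipticCoord R (s + t, s - t)).1 = z := by
        simp only [fromEllipticCoord]
        field_simp
        linear_combination hs - ht
      have hsnd := fromEllipticCoord_fst_sq_add_snd hR.ne' (s + t, s - t)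
      simp only [hfst] at hsnd
      exact Prod.ext hfst (by linarith)

theorem lintegral_comp_fromEllipticCoord (hR : 0 < R) (g : ℝ × ℝ → ℝ≥0∞) :
    ∫⁻ q in univ ×ˢ Ioi 0, g q = ∫⁻ p in Ioi R ×ˢ Ioo (-R) R,
      ENNReal.ofReal ((p.1 ^ 2 - p.2 ^ 2) / (4 * R)) * g (fromEllipticCoord R p) := by
  have hmeas : MeasurableSet (Ioi R ×ˢ Ioo (-R) R) := measurableSet_Ioi.prod measurableSet_Ioo
  rw [← image_fromEllipticCoord hR, lintegral_image_eq_lintegral_abs_det_fderiv_mul volume hmeas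
    (fun p _ => (hasFDerivAt_fromEllipticCoord hR.ne' p).hasFDerivWithinAt)
    (injOn_fromEllipticCoord hR) g]
  refine setLIntegral_congr_fun hmeas fun p ⟨hu, hv⟩ => ?_
  simp only [mem_Ioi, mem_Ioo] at hu hv
  rw [det_fderivFromEllipticCoord hR.ne', neg_div, abs_neg, abs_of_pos (by
    have : 0 < p.1 ^ 2 - p.2 ^ 2 := by nlinarith
    positivity)]

end EllipticCoord

theorem EuclideanSpace.lintegral_fin_three_comp_dist_dist {F : ℝ → ℝ → ℝ≥0∞}
    (hF : Measurable (Function.uncurry F)) {ξ η : EuclideanSpace ℝ (Fin 3)} {R : ℝ} (hR : 0 < R)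
    (hξη : dist ξ η = R) :
    ∫⁻ x, F (dist x ξ) (dist x η) = ENNReal.ofReal (π / (4 * R)) *
      ∫⁻ p in Ioi R ×ˢ Ioo (-R) R,
        ENNReal.ofReal (p.1 ^ 2 - p.2 ^ 2) * F ((p.1 + p.2) / 2) ((p.1 - p.2) / 2) := by
  let w : EuclideanSpace ℝ (Fin 3) := EuclideanSpace.single 0 R
  have hw : ‖w‖ = dist ξ η := by simp [w, hξη, hR.le]
  have hnorm : ∀ x : EuclideanSpace ℝ (Fin 3), ‖x‖ = √(x 0 ^ 2 + (x 1 ^ 2 + x 2 ^ 2)) := by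
    intro x
    simp [EuclideanSpace.norm_eq, Fin.sum_univ_three, add_assoc]
  let G : ℝ → ℝ → ℝ≥0∞ := fun z r => F √(z ^ 2 + r) √((z - R) ^ 2 + r)
  have hG : Measurable (Function.uncurry G) :=
    hF.comp (f := fun q : ℝ × ℝ => (√(q.1 ^ 2 + q.2), √((q.1 - R) ^ 2 + q.2))) (by fun_prop)
  have hFG : ∀ x : EuclideanSpace ℝ (Fin 3), F ‖x‖ ‖x - w‖ = G (x 0) (x 1 ^ 2 + x 2 ^ 2) := by
    intro x
    simp [hnorm, w, G]
  rw [lintegral_comp_dist_dist_eq_lintegral_comp_norm_norm F hw, lintegral_congr hFG,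
    EuclideanSpace.lintegral_fin_three_cylindrical hG, lintegral_comp_fromEllipticCoord hR]
  have hG_elliptic : ∀ p ∈ Ioi R ×ˢ Ioo (-R) R,
      ENNReal.ofReal ((p.1 ^ 2 - p.2 ^ 2) / (4 * R)) *
          G (fromEllipticCoord R p).1 (fromEllipticCoord R p).2 =
        ENNReal.ofReal (4 * R)⁻¹ *
          (ENNReal.ofReal (p.1 ^ 2 - p.2 ^ 2) * F ((p.1 + p.2) / 2) ((p.1 - p.2) / 2)) := by
    rintro p ⟨hu, hv⟩
    simp only [mem_Ioi, mem_Ioo] at hu hv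
    simp only [G, fromEllipticCoord_fst_sq_add_snd hR.ne',
      fromEllipticCoord_fst_sub_sq_add_snd hR.ne',
      sqrt_sq (by linarith : 0 ≤ (p.1 + p.2) / 2), sqrt_sq (by linarith : 0 ≤ (p.1 - p.2) / 2),
      div_eq_inv_mul _ (4 * R), ENNReal.ofReal_mul (inv_nonneg.2 (by positivity : 0 ≤ 4 * R)),
      mul_assoc]
  rw [setLIntegral_congr_fun (measurableSet_Ioi.prod measurableSet_Ioo) hG_elliptic,
    lintegral_const_mul' _ _ ENNReal.ofReal_ne_top, ← mul_assoc, ← ENNReal.ofReal_mul pi_pos.le,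
    div_eq_mul_inv]

theorem lintegral_Ioi_exp_neg_mul {a : ℝ} (ha : 0 < a) (c : ℝ) :
    ∫⁻ u in Ioi c, ENNReal.ofReal (exp (-a * u)) = ENNReal.ofReal (exp (-a * c) / a) := by
  rw [← ofReal_integral_eq_lintegral_ofReal (exp_neg_integrableOn_Ioi c ha)
      (Filter.Eventually.of_forall fun u => (exp_pos _).le),
    integral_exp_mul_Ioi (neg_lt_zero.2 ha), neg_div_neg_eq]

theorem lintegral_ellipticCoord_exp_div_mul_exp_div {a R : ℝ} (ha : 0 < a) (hR : 0 < R) :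
    ∫⁻ p in Ioi R ×ˢ Ioo (-R) R, ENNReal.ofReal (p.1 ^ 2 - p.2 ^ 2) *
        ENNReal.ofReal (exp (-a * ((p.1 + p.2) / 2)) / ((p.1 + p.2) / 2) *
          (exp (-a * ((p.1 - p.2) / 2)) / ((p.1 - p.2) / 2))) =
      ENNReal.ofReal (8 * R * exp (-a * R) / a) := by
  have hintegrand : ∀ p ∈ Ioi R ×ˢ Ioo (-R) R,
      ENNReal.ofReal (p.1 ^ 2 - p.2 ^ 2) *
          ENNReal.ofReal (exp (-a * ((p.1 + p.2) / 2)) / ((p.1 + p.2) / 2) *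
            (exp (-a * ((p.1 - p.2) / 2)) / ((p.1 - p.2) / 2))) =
        ENNReal.ofReal 4 * ENNReal.ofReal (exp (-a * p.1)) := by
    rintro p ⟨hu, hv⟩
    simp only [mem_Ioi, mem_Ioo] at hu hv
    have hs : p.1 + p.2 ≠ 0 := (by linarith : 0 < p.1 + p.2).ne'
    have ht : p.1 - p.2 ≠ 0 := (by linarith : 0 < p.1 - p.2).ne'
    rw [← ENNReal.ofReal_mul (by nlinarith), ← ENNReal.ofReal_mul zero_le_four, div_mul_div_comm,
      ← exp_add, show -a * ((p.1 + p.2) / 2) + -a * ((p.1 - p.2) / 2) = -a * p.1 by ring]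
    congr 1
    field_simp
    ring
  rw [setLIntegral_congr_fun (measurableSet_Ioi.prod measurableSet_Ioo) hintegrand,
    lintegral_const_mul' _ _ ENNReal.ofReal_ne_top, Measure.volume_eq_prod,
    setLIntegral_prod _ (by fun_prop)]
  simp only [lintegral_const, Measure.restrict_apply_univ, Real.volume_Ioo]
  rw [lintegral_mul_const' _ _ ENNReal.ofReal_ne_top, lintegral_Ioi_exp_neg_mul ha,
    ← ENNReal.ofReal_mul (by positivity), ← ENNReal.ofReal_mul zero_le_four]
  congr 1
  field_simp
  ring

end

/-- Yukawa kernel reproducing identity in `ℝ³`: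
`e^{-a|ξ-η|} = (a/2π) ∫_{ℝ³} (e^{-a|x-ξ|}/|x-ξ|)(e^{-a|x-η|}/|x-η|) dx`. -/
theorem yukawa_gram_identity (a : ℝ) (ha : 0 < a)
    (ξ η : EuclideanSpace ℝ (Fin 3)) (hne : ξ ≠ η) :
    Real.exp (-a * dist ξ η) =
      a / (2 * Real.pi) *
        ∫ x : EuclideanSpace ℝ (Fin 3),
          Real.exp (-a * dist x ξ) / dist x ξ * (Real.exp (-a * dist x η) / dist x η) := by
  have hR : 0 < dist ξ η := dist_pos.2 hne
  have hlint : ∫⁻ x : EuclideanSpace ℝ (Fin 3),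
      ENNReal.ofReal (exp (-a * dist x ξ) / dist x ξ * (exp (-a * dist x η) / dist x η)) =
        ENNReal.ofReal (2 * π * exp (-a * dist ξ η) / a) := by
    rw [EuclideanSpace.lintegral_fin_three_comp_dist_dist
        (F := fun s t => ENNReal.ofReal (exp (-a * s) / s * (exp (-a * t) / t))) (by fun_prop)
        hR rfl,
      lintegral_ellipticCoord_exp_div_mul_exp_div ha hR, ← ENNReal.ofReal_mul (by positivity)]
    congr 1
    field_simp
    ring
  rw [integral_eq_lintegral_of_nonneg_ae (Filter.Eventually.of_forall fun x => by positivity)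
    (by fun_prop), hlint, ENNReal.toReal_ofReal (by positivity)]
  field_simp
end

section
/- Let $p > 1/2$ and define the normalized Whittle–Matérn function $M_p(r) = \frac{r^p K_p(r)}{2^{p-1}\Gamma(p)}$ for $r>0$, with $M_p(0)=1$, where $K_p$ is the modified Bessel function of the second kind. Then $M_p$ is not completely monotone on $(0,\infty)$. -/
open Set MeasureTheory Real Filter Topology

/-!
Differentiating under the integral sign and integrating by parts gives the recurrence
`K_ν' = -K_{ν-1} - (ν/z) K_ν`, hence `(z^p K_p(z))' = -z^p K_{p-1}(z)`. From
`e^{-x} ≤ s^s x^{-s}` and `cosh r ≥ e^r / 2` one gets `K_ν(t) = O(t^{-s})` as `t → 0⁺` for every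
`s > |ν|`; since `|p - 1| < p` exactly when `p > 1/2`, the derivative `M_p'(t)` tends to `0` as
`t → 0⁺`. Complete monotonicity forces `M_p'' ≥ 0`, so `M_p'` is nondecreasing on `(0, ∞)` and
therefore nonnegative, whereas `M_p'(t) = -t^p K_{p-1}(t) / (2^{p-1} Γ(p)) < 0`.
-/

/-- The modified Bessel function of the second kind, via the integral representation
`K_p(z) = ∫_0^∞ e^{-z cosh r} cosh(p r) dr` (valid for `z > 0`). -/
noncomputable def besselK (p z : ℝ) : ℝ :=
  ∫ r in Set.Ioi (0 : ℝ), Real.exp (-z * Real.cosh r) * Real.cosh (p * r)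

lemma exp_neg_le_rpow_mul_rpow_neg {x s : ℝ} (hx : 0 < x) (hs : 0 < s) :
    exp (-x) ≤ s ^ s * x ^ (-s) := by
  have hlin : x / s ≤ exp (x / s - 1) := by linarith [add_one_le_exp (x / s - 1)]
  have hpow : x ^ s / s ^ s ≤ exp (x - s) := by
    calc x ^ s / s ^ s = (x / s) ^ s := (div_rpow hx.le hs.le s).symm
      _ ≤ exp (x / s - 1) ^ s := rpow_le_rpow (by positivity) hlin hs.le
      _ = exp (x - s) := by rw [← exp_mul]; congr 1; field_simp
  rw [div_le_iff₀ (by positivity)] at hpow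
  rw [rpow_neg hx.le, ← div_eq_mul_inv, le_div_iff₀ (by positivity)]
  calc exp (-x) * x ^ s ≤ exp (-x) * (exp (x - s) * s ^ s) := by gcongr
    _ = exp (-s) * s ^ s := by rw [← mul_assoc, ← exp_add]; ring_nf
    _ ≤ s ^ s := mul_le_of_le_one_left (by positivity) (exp_le_one_iff.2 (by linarith))

lemma cosh_le_exp_abs (x : ℝ) : cosh x ≤ exp |x| := by
  rw [← cosh_abs, cosh_eq]
  linarith [exp_le_exp.2 (show -|x| ≤ |x| by linarith [abs_nonneg x])]

lemma exp_neg_mul_cosh_le {z s : ℝ} (hz : 0 < z) (hs : 0 < s) (r : ℝ) :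
    exp (-z * cosh r) ≤ s ^ s * (z / 2) ^ (-s) * exp (-s * r) := by
  have hcosh : z / 2 * exp r ≤ z * cosh r := by rw [cosh_eq]; nlinarith [exp_pos (-r)]
  calc exp (-z * cosh r) ≤ exp (-(z / 2 * exp r)) := exp_le_exp.2 (by linarith)
    _ ≤ s ^ s * (z / 2 * exp r) ^ (-s) := exp_neg_le_rpow_mul_rpow_neg (by positivity) hs
    _ = s ^ s * (z / 2) ^ (-s) * exp (-s * r) := by
      rw [mul_rpow (by positivity) (exp_pos r).le, ← exp_mul, mul_assoc, mul_comm r]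

def IsExpBounded (f : ℝ → ℝ) (a : ℝ) : Prop :=
  ∀ r, 0 ≤ r → |f r| ≤ exp (a * r)

namespace IsExpBounded

variable {f g : ℝ → ℝ} {a b : ℝ}

lemma mul (hf : IsExpBounded f a) (hg : IsExpBounded g b) :
    IsExpBounded (fun r => f r * g r) (a + b) := fun r hr => by
  rw [abs_mul, add_mul, exp_add]
  exact mul_le_mul (hf r hr) (hg r hr) (abs_nonneg _) (exp_pos _).le

lemma abs (hf : IsExpBounded f a) : IsExpBounded (fun r => |f r|) a := fun r hr => by
  simpa using hf r hr

end IsExpBounded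

lemma isExpBounded_cosh_mul (ν : ℝ) : IsExpBounded (fun r => cosh (ν * r)) |ν| := by
  intro r hr
  simpa [abs_of_pos (cosh_pos _), abs_mul, abs_of_nonneg hr] using cosh_le_exp_abs (ν * r)

lemma isExpBounded_sinh_mul (ν : ℝ) : IsExpBounded (fun r => sinh (ν * r)) |ν| :=
  fun r hr => calc
    |sinh (ν * r)| ≤ cosh (ν * r) := by rw [abs_sinh, ← cosh_abs]; exact (sinh_lt_cosh _).le
    _ ≤ exp (|ν| * r) := by simpa [abs_of_pos (cosh_pos _)] using isExpBounded_cosh_mul ν r hr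

lemma isExpBounded_cosh : IsExpBounded cosh 1 := by
  simpa using isExpBounded_cosh_mul 1

lemma isExpBounded_sinh : IsExpBounded sinh 1 := by
  simpa using isExpBounded_sinh_mul 1

lemma integrableOn_exp_neg_mul_cosh_mul {z a : ℝ} {f : ℝ → ℝ} (hz : 0 < z)
    (hf : Continuous f) (hfa : IsExpBounded f a) :
    IntegrableOn (fun r => exp (-z * cosh r) * f r) (Ioi 0) := by
  set s := |a| + 1
  have hs : 0 < s := by positivity
  have hsa : 0 < s - a := by linarith [le_abs_self a]
  refine ((exp_neg_integrableOn_Ioi 0 hsa).const_mul (s ^ s * (z / 2) ^ (-s))).mono'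
    (by fun_prop : Continuous _).aestronglyMeasurable ?_
  filter_upwards [ae_restrict_mem measurableSet_Ioi] with r hr
  rw [norm_mul, norm_of_nonneg (exp_pos _).le, Real.norm_eq_abs]
  calc exp (-z * cosh r) * |f r| ≤ s ^ s * (z / 2) ^ (-s) * exp (-s * r) * exp (a * r) :=
        mul_le_mul (exp_neg_mul_cosh_le hz hs r) (hfa r hr.out.le) (abs_nonneg _)
          (by positivity)
    _ = s ^ s * (z / 2) ^ (-s) * exp (-(s - a) * r) := by rw [mul_assoc, ← exp_add]; ring_nf

lemma hasDerivAt_integral_exp_neg_mul_cosh_mul {a z : ℝ} {f : ℝ → ℝ} (hf : Continuous f)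
    (hfa : IsExpBounded f a) (hz : 0 < z) :
    HasDerivAt (fun w => ∫ r in Ioi 0, exp (-w * cosh r) * f r)
      (∫ r in Ioi 0, exp (-z * cosh r) * (-cosh r * f r)) z := by
  have hbound : ∀ r, 0 < r → ∀ w ∈ Metric.ball z (z / 2),
      ‖exp (-w * cosh r) * (-cosh r * f r)‖ ≤ exp (-(z / 2) * cosh r) * |cosh r * f r| := by
    intro r _ w hw
    have hw : z / 2 ≤ w := by
      rw [Metric.mem_ball, dist_eq, abs_lt] at hw; linarith
    rw [norm_mul, norm_of_nonneg (exp_pos _).le, neg_mul (cosh r), norm_neg, Real.norm_eq_abs]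
    gcongr
  refine (hasDerivAt_integral_of_dominated_loc_of_deriv_le (μ := volume.restrict (Ioi 0))
    (F := fun w r => exp (-w * cosh r) * f r) (Metric.ball_mem_nhds z (half_pos hz))
    (.of_forall fun w => (by fun_prop : Continuous _).aestronglyMeasurable)
    (integrableOn_exp_neg_mul_cosh_mul hz hf hfa)
    (by fun_prop : Continuous _).aestronglyMeasurable
    ((ae_restrict_mem measurableSet_Ioi).mono fun r hr => hbound r hr)
    (integrableOn_exp_neg_mul_cosh_mul (half_pos hz) (by fun_prop)
      (isExpBounded_cosh.mul hfa).abs) (.of_forall fun r w _ => ?_)).2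
  simpa [mul_comm, mul_assoc] using ((hasDerivAt_mul_const (cosh r)).neg.exp.mul_const (f r))

lemma integrableOn_besselK_integrand (ν : ℝ) {z : ℝ} (hz : 0 < z) :
    IntegrableOn (fun r => exp (-z * cosh r) * cosh (ν * r)) (Ioi 0) :=
  integrableOn_exp_neg_mul_cosh_mul hz (by fun_prop) (isExpBounded_cosh_mul ν)

lemma integrableOn_exp_neg_mul_cosh_mul_sinh_mul_sinh (ν : ℝ) {z : ℝ} (hz : 0 < z) :
    IntegrableOn (fun r => exp (-z * cosh r) * (sinh r * sinh (ν * r))) (Ioi 0) :=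
  integrableOn_exp_neg_mul_cosh_mul hz (by fun_prop)
    (isExpBounded_sinh.mul (isExpBounded_sinh_mul ν))

lemma mul_besselK_eq_integral_sinh_mul_sinh (ν : ℝ) {z : ℝ} (hz : 0 < z) :
    ν * besselK ν z = z * ∫ r in Ioi 0, exp (-z * cosh r) * (sinh r * sinh (ν * r)) := by
  set F : ℝ → ℝ := fun r => exp (-z * cosh r) * sinh (ν * r)
  have hK := (integrableOn_besselK_integrand ν hz).const_mul ν
  have hS := (integrableOn_exp_neg_mul_cosh_mul_sinh_mul_sinh ν hz).const_mul z
  have hF : ∀ r, HasDerivAt F (ν * (exp (-z * cosh r) * cosh (ν * r)) -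
      z * (exp (-z * cosh r) * (sinh r * sinh (ν * r)))) r := fun r => by
    refine (((hasDerivAt_cosh r).const_mul (-z)).exp.mul
      ((hasDerivAt_id r).const_mul ν).sinh).congr_deriv ?_
    simp only [id]
    ring
  have hFlim : Tendsto F atTop (𝓝 0) :=
    tendsto_zero_of_hasDerivAt_of_integrableOn_Ioi (fun r _ => hF r) (hK.sub hS)
      (integrableOn_exp_neg_mul_cosh_mul hz (by fun_prop) (isExpBounded_sinh_mul ν))
  have hFTC := integral_Ioi_of_hasDerivAt_of_tendsto' (fun r _ => hF r) (hK.sub hS) hFlim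
  rw [integral_sub hK hS, integral_const_mul, integral_const_mul] at hFTC
  simp only [F, mul_zero, sinh_zero, sub_zero] at hFTC
  rw [besselK]
  linarith

lemma hasDerivAt_besselK (ν : ℝ) {z : ℝ} (hz : 0 < z) :
    HasDerivAt (besselK ν) (-besselK (ν - 1) z - ν / z * besselK ν z) z := by
  refine (hasDerivAt_integral_exp_neg_mul_cosh_mul (by fun_prop) (isExpBounded_cosh_mul ν)
    hz).congr_deriv ?_
  have hsplit : ∫ r in Ioi 0, exp (-z * cosh r) * (-cosh r * cosh (ν * r)) =
      -(besselK (ν - 1) z + ∫ r in Ioi 0, exp (-z * cosh r) * (sinh r * sinh (ν * r))) := by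
    rw [besselK, ← integral_add (integrableOn_besselK_integrand (ν - 1) hz)
      (integrableOn_exp_neg_mul_cosh_mul_sinh_mul_sinh ν hz), ← integral_neg]
    refine setIntegral_congr_fun measurableSet_Ioi fun r _ => ?_
    rw [show (ν - 1) * r = ν * r - r by ring, cosh_sub]
    ring
  rw [hsplit, div_mul_eq_mul_div, mul_besselK_eq_integral_sinh_mul_sinh ν hz, mul_div_cancel_left₀ _ hz.ne']
  ring

lemma hasDerivAt_rpow_mul_besselK (p : ℝ) {z : ℝ} (hz : 0 < z) :
    HasDerivAt (fun t => t ^ p * besselK p t) (-(z ^ p * besselK (p - 1) z)) z := by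
  refine ((hasDerivAt_rpow_const (Or.inl hz.ne')).mul (hasDerivAt_besselK p hz)).congr_deriv ?_
  rw [rpow_sub_one hz.ne']
  field_simp
  ring

lemma besselK_nonneg (ν z : ℝ) : 0 ≤ besselK ν z :=
  setIntegral_nonneg measurableSet_Ioi fun r _ => by positivity

lemma besselK_pos (ν : ℝ) {z : ℝ} (hz : 0 < z) : 0 < besselK ν z := by
  rw [besselK, setIntegral_pos_iff_support_of_nonneg_ae (.of_forall fun r => by positivity)
    (integrableOn_besselK_integrand ν hz)]
  have hsupp : Function.support (fun r => exp (-z * cosh r) * cosh (ν * r)) = univ :=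
    Function.support_eq_univ fun r => by positivity
  rw [hsupp, univ_inter, Real.volume_Ioi]
  exact ENNReal.coe_lt_top

lemma exists_besselK_le_rpow_neg (ν : ℝ) {s : ℝ} (hs : |ν| < s) :
    ∃ C, ∀ t > 0, besselK ν t ≤ C * t ^ (-s) := by
  have hs0 : 0 < s := (abs_nonneg ν).trans_lt hs
  have hint := exp_neg_integrableOn_Ioi 0 (sub_pos.2 hs)
  refine ⟨s ^ s * 2 ^ s * ∫ r in Ioi 0, exp (-(s - |ν|) * r), fun t ht => ?_⟩
  have hpt : ∀ r ∈ Ioi (0 : ℝ), exp (-t * cosh r) * cosh (ν * r) ≤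
      s ^ s * 2 ^ s * t ^ (-s) * exp (-(s - |ν|) * r) := fun r hr => by
    have hcosh := (le_abs_self _).trans (isExpBounded_cosh_mul ν r hr.out.le)
    calc exp (-t * cosh r) * cosh (ν * r)
        ≤ s ^ s * (t / 2) ^ (-s) * exp (-s * r) * exp (|ν| * r) :=
          mul_le_mul (exp_neg_mul_cosh_le ht hs0 r) hcosh (cosh_pos _).le (by positivity)
      _ = s ^ s * 2 ^ s * t ^ (-s) * exp (-(s - |ν|) * r) := by
          rw [div_rpow ht.le zero_le_two, rpow_neg zero_le_two, mul_assoc _ (exp _), ← exp_add]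
          field_simp
          ring_nf
  calc besselK ν t ≤ ∫ r in Ioi 0, s ^ s * 2 ^ s * t ^ (-s) * exp (-(s - |ν|) * r) :=
        setIntegral_mono_on (integrableOn_besselK_integrand ν ht) (hint.const_mul _)
          measurableSet_Ioi hpt
    _ = _ := by rw [integral_const_mul]; ring

lemma tendsto_rpow_mul_besselK {ν p : ℝ} (h : |ν| < p) :
    Tendsto (fun t => t ^ p * besselK ν t) (𝓝[>] 0) (𝓝 0) := by
  obtain ⟨s, hνs, hsp⟩ := exists_between h
  obtain ⟨C, hC⟩ := exists_besselK_le_rpow_neg ν hνs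
  have hlim : Tendsto (fun t : ℝ => C * t ^ (p - s)) (𝓝[>] 0) (𝓝 0) := by
    have hcont := (continuousAt_rpow_const 0 (p - s) (Or.inr (by linarith))).tendsto
    simpa [zero_rpow (show p - s ≠ 0 by linarith)] using
      (hcont.mono_left (nhdsWithin_le_nhds (s := Ioi 0))).const_mul C
  refine squeeze_zero' (eventually_nhdsWithin_of_forall fun t ht =>
    mul_nonneg (rpow_nonneg (le_of_lt ht) _) (besselK_nonneg _ _))
    (eventually_nhdsWithin_of_forall fun t ht => ?_) hlim
  calc t ^ p * besselK ν t ≤ t ^ p * (C * t ^ (-s)) :=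
        mul_le_mul_of_nonneg_left (hC t ht) (rpow_nonneg (le_of_lt ht) _)
    _ = C * t ^ (p - s) := by rw [rpow_sub ht, rpow_neg (le_of_lt ht)]; ring

lemma monotoneOn_of_hasDerivAt_of_iteratedDeriv_two_nonneg {f f' : ℝ → ℝ} {s : Set ℝ}
    (hs : IsOpen s) (hconv : Convex ℝ s) (hf : ∀ x ∈ s, HasDerivAt f (f' x) x)
    (hf' : DifferentiableOn ℝ f' s) (h2 : ∀ x ∈ s, 0 ≤ iteratedDeriv 2 f x) :
    MonotoneOn f' s := by
  refine monotoneOn_of_deriv_nonneg hconv hf'.continuousOn (hf'.mono interior_subset)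
    fun x hx => ?_
  rw [hs.interior_eq] at hx
  have hderiv : deriv f =ᶠ[𝓝 x] f' :=
    eventually_of_mem (hs.mem_nhds hx) fun y hy => (hf y hy).deriv
  rw [← hderiv.deriv_eq]
  simpa [iteratedDeriv_succ] using h2 x hx

lemma MonotoneOn.le_of_tendsto_nhdsGT {f : ℝ → ℝ} {a b t : ℝ} (hf : MonotoneOn f (Ioi a))
    (hlim : Tendsto f (𝓝[>] a) (𝓝 b)) (ht : a < t) : b ≤ f t :=
  le_of_tendsto hlim <| by
    filter_upwards [Ioo_mem_nhdsGT ht] with s hs using hf hs.1 (mem_Ioi.2 ht) hs.2.le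

/-- For `p > 1/2`, the normalized Whittle–Matérn function
`M_p(r) = r^p K_p(r) / (2^{p-1} Γ(p))` is not completely monotone on `(0,∞)`. -/
theorem matern_not_completely_monotone (p : ℝ) (hp : 1 / 2 < p) :
    ¬ (∀ (k : ℕ) (t : ℝ), 0 < t →
      0 ≤ (-1 : ℝ) ^ k * iteratedDeriv k
        (fun r : ℝ => r ^ p * besselK p r / (2 ^ (p - 1) * Real.Gamma p)) t) := by
  intro hcm
  have hC : 0 < 2 ^ (p - 1) * Gamma p := by
    have := Gamma_pos_of_pos (show 0 < p by linarith); positivity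
  set C := 2 ^ (p - 1) * Gamma p
  set φ : ℝ → ℝ := fun z => -(z ^ p * besselK (p - 1) z) / C
  have hderiv : ∀ z ∈ Ioi (0 : ℝ), HasDerivAt (fun r => r ^ p * besselK p r / C) (φ z) z :=
    fun z hz => (hasDerivAt_rpow_mul_besselK p hz).div_const C
  have hφ : DifferentiableOn ℝ φ (Ioi 0) := fun z hz =>
    (((hasDerivAt_rpow_const (Or.inl (ne_of_gt hz))).mul
      (hasDerivAt_besselK (p - 1) hz)).neg.div_const C).differentiableAt.differentiableWithinAt
  have hmono : MonotoneOn φ (Ioi 0) :=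
    monotoneOn_of_hasDerivAt_of_iteratedDeriv_two_nonneg isOpen_Ioi (convex_Ioi 0) hderiv hφ
      fun t ht => by simpa using hcm 2 t ht
  have hlim : Tendsto φ (𝓝[>] 0) (𝓝 0) := by
    have hνp : |p - 1| < p := abs_sub_lt_iff.2 ⟨by linarith, by linarith⟩
    simpa using (tendsto_rpow_mul_besselK hνp).neg.div_const C
  have hφ1 : φ 1 < 0 := by
    simpa [φ] using div_neg_of_neg_of_pos (neg_neg_of_pos (besselK_pos (p - 1) one_pos)) hC
  exact hφ1.not_ge (hmono.le_of_tendsto_nhdsGT hlim one_pos)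
end
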